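/- arXiv:1101.4069 — 7 statements merged into one kernel-verified Lean document; each statement's English description precedes it below -/
import Mathlib

section
/- Let (B'₁, p₁, ψ₁) and (B'₂, p₂, ψ₂) be two square-zero extensions of B by J as A-algebras. Let P = {(x, y) ∈ B'₁ × B'₂ : p₁(x) = p₂(y)}, an A-subalgebra of B'₁ × B'₂, and let K = {(x, y) ∈ P : x ∈ ker p₁, y ∈ ker p₂, ψ₁(x) = ψ₂(y)}. Then K is an ideal of P, the induced surjection p : P/K → B has square-zero kernel, and the map J → ker p sending j to the class of (ψ₁⁻¹(j), 0) is a B-module isomorphism; thus P/K is again a square-zero extension of B by J as A-algebras. -/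
set_option synthInstance.maxHeartbeats 1000000
set_option maxHeartbeats 1000000


/- STATEMENT 4: Let `(B'₁, p₁, ψ₁)` and `(B'₂, p₂, ψ₂)` be two square-zero extensions of `B`
by `J` as `A`-algebras: `pᵢ : B'ᵢ → B` is a surjective `A`-algebra homomorphism with
square-zero kernel, and `ψᵢ : ker pᵢ ≅ J` is an isomorphism of `B`-modules, the `B`-action on
`ker pᵢ` being `b • x = b̃ * x` for any lift `b̃` of `b`.  Let
`P = {(x, y) : p₁ x = p₂ y} ⊆ B'₁ × B'₂` and
`K = {(x, y) ∈ P : x ∈ ker p₁, y ∈ ker p₂, ψ₁ x = ψ₂ y}`.  Then `K` is an ideal of `P`, the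
induced surjection `p : P/K → B` has square-zero kernel, and `j ↦ [(ψ₁⁻¹ j, 0)]` is a
`B`-module isomorphism `J ≅ ker p`; thus `P/K` is again a square-zero extension of `B` by `J`
as `A`-algebras. -/
theorem stmt4 {A B J : Type*} [CommRing A] [CommRing B] [Algebra A B]
    [AddCommGroup J] [Module B J]
    {B'₁ B'₂ : Type*} [CommRing B'₁] [CommRing B'₂] [Algebra A B'₁] [Algebra A B'₂]
    (p₁ : B'₁ →ₐ[A] B) (p₂ : B'₂ →ₐ[A] B)
    (hp₁ : Function.Surjective p₁) (hp₂ : Function.Surjective p₂)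
    (hsq₁ : ∀ x y : B'₁, p₁ x = 0 → p₁ y = 0 → x * y = 0)
    (hsq₂ : ∀ x y : B'₂, p₂ x = 0 → p₂ y = 0 → x * y = 0)
    (ψ₁ : RingHom.ker p₁.toRingHom →+ J) (ψ₂ : RingHom.ker p₂.toRingHom →+ J)
    (hψ₁ : Function.Bijective ψ₁) (hψ₂ : Function.Bijective ψ₂)
    (hlin₁ : ∀ (x : B'₁) (k : RingHom.ker p₁.toRingHom),
      ψ₁ ⟨x * k, Ideal.mul_mem_left _ x k.2⟩ = p₁ x • ψ₁ k)
    (hlin₂ : ∀ (x : B'₂) (k : RingHom.ker p₂.toRingHom),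
      ψ₂ ⟨x * k, Ideal.mul_mem_left _ x k.2⟩ = p₂ x • ψ₂ k)
    (P : Subalgebra A (B'₁ × B'₂))
    (hP : P = AlgHom.equalizer (p₁.comp (AlgHom.fst A B'₁ B'₂))
      (p₂.comp (AlgHom.snd A B'₁ B'₂))) :
    -- `K` is an ideal of `P`:
    ∃ K : Ideal P,
      (∀ z : P, z ∈ K ↔ ∃ (h₁ : (z : B'₁ × B'₂).1 ∈ RingHom.ker p₁.toRingHom)
        (h₂ : (z : B'₁ × B'₂).2 ∈ RingHom.ker p₂.toRingHom),
        ψ₁ ⟨(z : B'₁ × B'₂).1, h₁⟩ = ψ₂ ⟨(z : B'₁ × B'₂).2, h₂⟩) ∧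
      -- the induced surjection `p : P/K → B` ...
      ∃ p : (P ⧸ K) →ₐ[A] B,
        (∀ z : P, p (Ideal.Quotient.mk K z) = p₁ (z : B'₁ × B'₂).1) ∧
        Function.Surjective p ∧
        -- ... has square-zero kernel,
        (∀ x y : P ⧸ K, p x = 0 → p y = 0 → x * y = 0) ∧
        -- and `j ↦ [(ψ₁⁻¹ j, 0)]` is a `B`-module isomorphism `J ≅ ker p`:
        ∃ Θ : J →+ P ⧸ K,
          -- `Θ` sends `ψ₁ k` to the class of `(k, 0)`, i.e. `Θ j = [(ψ₁⁻¹ j, 0)]`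
          (∀ (k : RingHom.ker p₁.toRingHom) (hk : ((k : B'₁), (0 : B'₂)) ∈ P),
            Θ (ψ₁ k) = Ideal.Quotient.mk K ⟨((k : B'₁), (0 : B'₂)), hk⟩) ∧
          -- `Θ` is injective with image exactly `ker p`
          Function.Injective Θ ∧
          (∀ w : P ⧸ K, p w = 0 ↔ ∃ j : J, Θ j = w) ∧
          -- `Θ` is `B`-linear, the `B`-action on `ker p` being by multiplication by lifts
          (∀ (z : P) (j : J),
            Ideal.Quotient.mk K z * Θ j = Θ (p₁ (z : B'₁ × B'₂).1 • j)) := by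
  have memP : ∀ z : B'₁ × B'₂, z ∈ P ↔ p₁ z.1 = p₂ z.2 := by
    intro z; rw [hP]; exact Iff.rfl
  -- helper lemmas about ψ on subtypes
  have hψ₁add : ∀ (x y : B'₁) (hx : x ∈ RingHom.ker p₁.toRingHom)
      (hy : y ∈ RingHom.ker p₁.toRingHom),
      ψ₁ ⟨x + y, add_mem hx hy⟩ = ψ₁ ⟨x, hx⟩ + ψ₁ ⟨y, hy⟩ :=
    fun x y hx hy => map_add ψ₁ ⟨x, hx⟩ ⟨y, hy⟩
  have hψ₂add : ∀ (x y : B'₂) (hx : x ∈ RingHom.ker p₂.toRingHom)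
      (hy : y ∈ RingHom.ker p₂.toRingHom),
      ψ₂ ⟨x + y, add_mem hx hy⟩ = ψ₂ ⟨x, hx⟩ + ψ₂ ⟨y, hy⟩ :=
    fun x y hx hy => map_add ψ₂ ⟨x, hx⟩ ⟨y, hy⟩
  have hψ₁z : ∀ (x : B'₁) (hx : x ∈ RingHom.ker p₁.toRingHom) (_ : x = 0),
      ψ₁ ⟨x, hx⟩ = 0 := by
    rintro x hx rfl
    rw [show (⟨(0:B'₁), hx⟩ : RingHom.ker p₁.toRingHom) = 0 from Subtype.ext rfl, map_zero]
  have hψ₂z : ∀ (x : B'₂) (hx : x ∈ RingHom.ker p₂.toRingHom) (_ : x = 0),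
      ψ₂ ⟨x, hx⟩ = 0 := by
    rintro x hx rfl
    rw [show (⟨(0:B'₂), hx⟩ : RingHom.ker p₂.toRingHom) = 0 from Subtype.ext rfl, map_zero]
  classical
  set Kp : P → Prop := fun z => ∃ (h₁ : (z : B'₁ × B'₂).1 ∈ RingHom.ker p₁.toRingHom)
        (h₂ : (z : B'₁ × B'₂).2 ∈ RingHom.ker p₂.toRingHom),
        ψ₁ ⟨(z : B'₁ × B'₂).1, h₁⟩ = ψ₂ ⟨(z : B'₁ × B'₂).2, h₂⟩ with hKp
  refine ⟨({ carrier := setOf Kp,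
             add_mem' := ?_, zero_mem' := ?_, smul_mem' := ?_ } : Ideal P),
    fun z => Iff.rfl, ?_⟩
  · rintro a b ⟨ha1, ha2, ha⟩ ⟨hb1, hb2, hb⟩
    refine ⟨add_mem ha1 hb1, add_mem ha2 hb2, ?_⟩
    show ψ₁ ⟨(a : B'₁ × B'₂).1 + (b : B'₁ × B'₂).1, _⟩ =
      ψ₂ ⟨(a : B'₁ × B'₂).2 + (b : B'₁ × B'₂).2, _⟩
    rw [hψ₁add _ _ ha1 hb1, hψ₂add _ _ ha2 hb2, ha, hb]
  · refine ⟨zero_mem _, zero_mem _, ?_⟩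
    rw [hψ₁z (((0:P) : B'₁ × B'₂).1) (zero_mem _) rfl,
      hψ₂z (((0:P) : B'₁ × B'₂).2) (zero_mem _) rfl]
  · rintro c a ⟨ha1, ha2, ha⟩
    refine ⟨Ideal.mul_mem_left _ _ ha1, Ideal.mul_mem_left _ _ ha2, ?_⟩
    show ψ₁ ⟨(c : B'₁ × B'₂).1 * (a : B'₁ × B'₂).1, _⟩ =
      ψ₂ ⟨(c : B'₁ × B'₂).2 * (a : B'₁ × B'₂).2, _⟩
    rw [show (⟨(c : B'₁ × B'₂).1 * (a : B'₁ × B'₂).1, _⟩ : RingHom.ker p₁.toRingHom)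
        = ⟨(c : B'₁ × B'₂).1 * (⟨(a : B'₁ × B'₂).1, ha1⟩ : RingHom.ker p₁.toRingHom),
          Ideal.mul_mem_left _ _ ha1⟩ from rfl,
      show (⟨(c : B'₁ × B'₂).2 * (a : B'₁ × B'₂).2, _⟩ : RingHom.ker p₂.toRingHom)
        = ⟨(c : B'₁ × B'₂).2 * (⟨(a : B'₁ × B'₂).2, ha2⟩ : RingHom.ker p₂.toRingHom),
          Ideal.mul_mem_left _ _ ha2⟩ from rfl,
      hlin₁, hlin₂, ha, (memP c.1).1 c.2]
  have hψ₁sub : ∀ (x y : B'₁) (hx : x ∈ RingHom.ker p₁.toRingHom)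
      (hy : y ∈ RingHom.ker p₁.toRingHom),
      ψ₁ ⟨x - y, sub_mem hx hy⟩ = ψ₁ ⟨x, hx⟩ - ψ₁ ⟨y, hy⟩ :=
    fun x y hx hy => map_sub ψ₁ ⟨x, hx⟩ ⟨y, hy⟩
  have hψ₂sub : ∀ (x y : B'₂) (hx : x ∈ RingHom.ker p₂.toRingHom)
      (hy : y ∈ RingHom.ker p₂.toRingHom),
      ψ₂ ⟨x - y, sub_mem hx hy⟩ = ψ₂ ⟨x, hx⟩ - ψ₂ ⟨y, hy⟩ :=
    fun x y hx hy => map_sub ψ₂ ⟨x, hx⟩ ⟨y, hy⟩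
  have main : ∀ K : Ideal P, (∀ z : P, z ∈ K ↔ Kp z) →
      ∃ p : (P ⧸ K) →ₐ[A] B,
        (∀ z : P, p (Ideal.Quotient.mk K z) = p₁ (z : B'₁ × B'₂).1) ∧
        Function.Surjective p ∧
        (∀ x y : P ⧸ K, p x = 0 → p y = 0 → x * y = 0) ∧
        ∃ Θ : J →+ P ⧸ K,
          (∀ (k : RingHom.ker p₁.toRingHom) (hk : ((k : B'₁), (0 : B'₂)) ∈ P),
            Θ (ψ₁ k) = Ideal.Quotient.mk K ⟨((k : B'₁), (0 : B'₂)), hk⟩) ∧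
          Function.Injective Θ ∧
          (∀ w : P ⧸ K, p w = 0 ↔ ∃ j : J, Θ j = w) ∧
          (∀ (z : P) (j : J),
            Ideal.Quotient.mk K z * Θ j = Θ (p₁ (z : B'₁ × B'₂).1 • j)) := by
    intro K hK
    set q : P →ₐ[A] B := (p₁.comp (AlgHom.fst A B'₁ B'₂)).comp P.val with hqdef
    have hq0 : ∀ a ∈ K, q a = 0 := by
      intro a ha
      obtain ⟨h1, -, -⟩ := (hK a).1 ha
      exact h1
    set pb : (P ⧸ K) →ₐ[A] B := Ideal.Quotient.liftₐ K q hq0 with hpbdef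
    have hp : ∀ z : P, pb (Ideal.Quotient.mk K z) = p₁ (z : B'₁ × B'₂).1 := by
      intro z
      rw [hpbdef, Ideal.Quotient.liftₐ_apply]
      rfl
    have hsnd : ∀ z : P, p₁ (z : B'₁ × B'₂).1 = p₂ (z : B'₁ × B'₂).2 :=
      fun z => (memP _).1 z.2
    refine ⟨pb, hp, ?_, ?_, ?_⟩
    · -- surjectivity
      intro b
      obtain ⟨x, hx⟩ := hp₁ b
      obtain ⟨y, hy⟩ := hp₂ b
      have hm : ((x, y) : B'₁ × B'₂) ∈ P := (memP _).2 (hx.trans hy.symm)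
      exact ⟨Ideal.Quotient.mk K ⟨(x, y), hm⟩, (hp _).trans hx⟩
    · -- square zero
      intro x y hx hy
      obtain ⟨z, rfl⟩ := Ideal.Quotient.mk_surjective x
      obtain ⟨w, rfl⟩ := Ideal.Quotient.mk_surjective y
      rw [hp] at hx hy
      have hz2 : p₂ (z : B'₁ × B'₂).2 = 0 := (hsnd z).symm.trans hx
      have hw2 : p₂ (w : B'₁ × B'₂).2 = 0 := (hsnd w).symm.trans hy
      have hzw : z * w = 0 := by
        apply Subtype.ext
        apply Prod.ext
        · exact hsq₁ _ _ hx hy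
        · exact hsq₂ _ _ hz2 hw2
      rw [← map_mul, hzw, map_zero]
    · -- the module iso Θ
      have memι : ∀ k : RingHom.ker p₁.toRingHom,
          (((k : B'₁), (0 : B'₂)) : B'₁ × B'₂) ∈ P := by
        intro k
        refine (memP _).2 ?_
        rw [map_zero]
        exact k.2
      set ι : RingHom.ker p₁.toRingHom → P := fun k => ⟨((k : B'₁), 0), memι k⟩ with hιdef
      have hιadd : ∀ k l, ι (k + l) = ι k + ι l :=
        fun k l => Subtype.ext (Prod.ext rfl (zero_add 0).symm)
      have hιzero : ι 0 = 0 := Subtype.ext rfl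
      set e₁ : RingHom.ker p₁.toRingHom ≃+ J := AddEquiv.ofBijective ψ₁ hψ₁ with he₁def
      have he₁ : ∀ k, e₁ k = ψ₁ k := fun k => rfl
      set Θ : J →+ P ⧸ K :=
        { toFun := fun j => Ideal.Quotient.mk K (ι (e₁.symm j)),
          map_zero' := by
            show Ideal.Quotient.mk K (ι (e₁.symm 0)) = 0
            rw [show e₁.symm (0:J) = 0 from map_zero e₁.symm, hιzero, map_zero],
          map_add' := fun a b => by
            show Ideal.Quotient.mk K (ι (e₁.symm (a + b))) =
              Ideal.Quotient.mk K (ι (e₁.symm a)) + Ideal.Quotient.mk K (ι (e₁.symm b))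
            rw [show e₁.symm (a + b) = e₁.symm a + e₁.symm b from map_add e₁.symm a b,
              hιadd, map_add] } with hΘdef
      have hΘ : ∀ j, Θ j = Ideal.Quotient.mk K (ι (e₁.symm j)) := fun j => rfl
      have hΘψ : ∀ (k : RingHom.ker p₁.toRingHom) (hk : ((k : B'₁), (0 : B'₂)) ∈ P),
          Θ (ψ₁ k) = Ideal.Quotient.mk K ⟨((k : B'₁), (0 : B'₂)), hk⟩ := by
        intro k hk
        have hsymm : e₁.symm (ψ₁ k) = k := e₁.symm_apply_apply k
        rw [hΘ, hsymm]
      refine ⟨Θ, hΘψ, ?_, ?_, ?_⟩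
      · -- injective
        rw [injective_iff_map_eq_zero]
        intro j hj
        rw [hΘ, Ideal.Quotient.eq_zero_iff_mem] at hj
        obtain ⟨h1, h2, he⟩ := (hK _).1 hj
        have h0 : ψ₁ ⟨(ι (e₁.symm j) : B'₁ × B'₂).1, h1⟩ = 0 := by
          rw [he, hψ₂z _ _ rfl]
        have hj0 : ψ₁ (e₁.symm j) = 0 := by
          rw [show e₁.symm j = ⟨(ι (e₁.symm j) : B'₁ × B'₂).1, h1⟩ from Subtype.ext rfl]
          exact h0
        calc j = e₁ (e₁.symm j) := (e₁.apply_symm_apply j).symm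
        _ = ψ₁ (e₁.symm j) := he₁ _
        _ = 0 := hj0
      · -- image = kernel
        intro w
        constructor
        · intro hw
          obtain ⟨z, rfl⟩ := Ideal.Quotient.mk_surjective w
          rw [hp] at hw
          have hz2 : p₂ (z : B'₁ × B'₂).2 = 0 := (hsnd z).symm.trans hw
          refine ⟨ψ₁ ⟨(z : B'₁ × B'₂).1, hw⟩ - ψ₂ ⟨(z : B'₁ × B'₂).2, hz2⟩, ?_⟩
          rw [hΘ, Ideal.Quotient.mk_eq_mk_iff_sub_mem]
          set k := e₁.symm (ψ₁ ⟨(z : B'₁ × B'₂).1, hw⟩ - ψ₂ ⟨(z : B'₁ × B'₂).2, hz2⟩) with hkdef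
          have hψk : ψ₁ k = ψ₁ ⟨(z : B'₁ × B'₂).1, hw⟩ - ψ₂ ⟨(z : B'₁ × B'₂).2, hz2⟩ := by
            rw [← he₁ k, hkdef, e₁.apply_symm_apply]
          refine (hK _).2 ⟨sub_mem k.2 hw, sub_mem (zero_mem _) hz2, ?_⟩
          show ψ₁ ⟨(k : B'₁) - (z : B'₁ × B'₂).1, _⟩ = ψ₂ ⟨0 - (z : B'₁ × B'₂).2, _⟩
          rw [hψ₁sub _ _ k.2 hw, hψ₂sub _ _ (zero_mem _) hz2, hψ₂z _ _ rfl,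
            show ψ₁ ⟨(k : B'₁), k.2⟩ = ψ₁ k from congrArg ψ₁ (Subtype.ext rfl), hψk]
          abel
        · rintro ⟨j, rfl⟩
          rw [hΘ, hp]
          exact (e₁.symm j).2
      · -- B-linearity
        intro z j
        set k := e₁.symm j with hkdef
        have hψk : ψ₁ k = j := by rw [← he₁ k, hkdef, e₁.apply_symm_apply]
        set k' : RingHom.ker p₁.toRingHom :=
          ⟨(z : B'₁ × B'₂).1 * (k : B'₁), Ideal.mul_mem_left _ _ k.2⟩ with hk'def
        have hmul : z * ι k = ι k' := Subtype.ext (Prod.ext rfl (mul_zero _))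
        have hψk' : ψ₁ k' = p₁ (z : B'₁ × B'₂).1 • j := by
          rw [hk'def, hlin₁, hψk]
        rw [hΘ j, ← map_mul, hmul, ← hψk', hΘψ k' (memι k')]
  exact main _ (fun z => Iff.rfl)
end

section
/- Let q : A' → A be a surjective ring homomorphism whose kernel I satisfies I·I = 0, let σ be a type, B = MvPolynomial σ A, J a B-module, and φ : I → J an A-module homomorphism. Suppose (B'₁, p₁, g₁, ψ₁) and (B'₂, p₂, g₂, ψ₂) are two solutions of the deformation problem: for i = 1, 2, p_i : B'_i → B is a surjective ring homomorphism with square-zero kernel, g_i : A' → B'_i is a ring homomorphism with p_i ∘ g_i equal to the composite of q with the structure map A → B, and ψ_i : ker p_i ≅ J is a B-module isomorphism with ψ_i(g_i(i')) = φ(i') for all i' ∈ I. Then there exists a ring isomorphism θ : B'₁ → B'₂ with p₂ ∘ θ = p₁, θ ∘ g₁ = g₂, and ψ₂(θ(x)) = ψ₁(x) for all x ∈ ker p₁. -/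
/-- A solution of the deformation problem for `(q : A' → A, B, J, φ)`: a commutative ring
`B'`, a surjective ring homomorphism `p : B' → B` with square-zero kernel, a ring
homomorphism `g : A' → B'` lifting `A' → A → B`, and a `B`-module isomorphism
`ψ : ker p ≅ J` (the `B`-action on `ker p` being `b • x = b̃ * x` for any lift `b̃` of `b`)
such that `ψ (g i) = φ i` for all `i ∈ I = ker q`. -/
structure DefSolution {A' A B J : Type*} [CommRing A'] [CommRing A] [CommRing B]
    [Algebra A B] [AddCommGroup J] [Module B J]
    (q : A' →+* A) (φ : RingHom.ker q →+ J) where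
  carrier : Type*
  [ring : CommRing carrier]
  p : carrier →+* B
  surj : Function.Surjective p
  sq : ∀ x y : carrier, p x = 0 → p y = 0 → x * y = 0
  g : A' →+* carrier
  comm : p.comp g = (algebraMap A B).comp q
  ψ : RingHom.ker p →+ J
  bij : Function.Bijective ψ
  lin : ∀ (x : carrier) (k : RingHom.ker p),
    ψ ⟨x * k, Ideal.mul_mem_left _ x k.2⟩ = p x • ψ k
  mem : ∀ i : RingHom.ker q, g i ∈ RingHom.ker p
  compat : ∀ i : RingHom.ker q, ψ ⟨g i, mem i⟩ = φ i

attribute [instance] DefSolution.ring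

namespace Stmt6Aux

open MvPolynomial

variable {A' A : Type*} [CommRing A'] [CommRing A] {q : A' →+* A}
  {σ J : Type*} [AddCommGroup J] [Module (MvPolynomial σ A) J]
  {φ : RingHom.ker q →+ J}

noncomputable def Xl (S : DefSolution (B := MvPolynomial σ A) q φ) (s : σ) : S.carrier :=
  (S.surj (X s)).choose

theorem p_Xl (S : DefSolution (B := MvPolynomial σ A) q φ) (s : σ) :
    S.p (Xl S s) = X s := (S.surj (X s)).choose_spec

noncomputable def F (S : DefSolution (B := MvPolynomial σ A) q φ) :
    MvPolynomial σ A' →+* S.carrier := eval₂Hom S.g (Xl S)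

theorem F_C (S : DefSolution (B := MvPolynomial σ A) q φ) (a' : A') :
    F S (C a') = S.g a' := eval₂_C _ _ _

theorem p_F (S : DefSolution (B := MvPolynomial σ A) q φ) (w : MvPolynomial σ A') :
    S.p (F S w) = MvPolynomial.map q w := by
  have h : S.p.comp (F S) = MvPolynomial.map (σ := σ) q := by
    apply MvPolynomial.ringHom_ext
    · intro a'
      simp only [RingHom.comp_apply, F_C, map_C]
      have h2 := RingHom.congr_fun S.comm a'
      simp only [RingHom.comp_apply] at h2
      rw [h2, MvPolynomial.algebraMap_eq]
    · intro s
      simp only [RingHom.comp_apply, map_X]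
      have : F S (X s) = Xl S s := eval₂_X _ _ _
      rw [this, p_Xl]
  exact RingHom.congr_fun h w

theorem p_coe_ker (S : DefSolution (B := MvPolynomial σ A) q φ) (k : RingHom.ker S.p) :
    S.p ↑k = 0 := RingHom.mem_ker.mp k.2

theorem mem_ker_F (S : DefSolution (B := MvPolynomial σ A) q φ) {k : MvPolynomial σ A'}
    (hk : MvPolynomial.map q k = 0) : F S k ∈ RingHom.ker S.p := by
  rw [RingHom.mem_ker, p_F, hk]

theorem psi_congr (S : DefSolution (B := MvPolynomial σ A) q φ) {a b : S.carrier}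
    (h : a = b) (ha : a ∈ RingHom.ker S.p) (hb : b ∈ RingHom.ker S.p) :
    S.ψ ⟨a, ha⟩ = S.ψ ⟨b, hb⟩ := by subst h; rfl

theorem psi_add (S : DefSolution (B := MvPolynomial σ A) q φ) (a b : S.carrier)
    (ha : a ∈ RingHom.ker S.p) (hb : b ∈ RingHom.ker S.p) (hab : a + b ∈ RingHom.ker S.p) :
    S.ψ ⟨a + b, hab⟩ = S.ψ ⟨a, ha⟩ + S.ψ ⟨b, hb⟩ := by
  have : (⟨a + b, hab⟩ : RingHom.ker S.p) = ⟨a, ha⟩ + ⟨b, hb⟩ := rfl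
  rw [this, map_add]

theorem psi_lin' (S : DefSolution (B := MvPolynomial σ A) q φ) (x k : S.carrier)
    (hk : k ∈ RingHom.ker S.p) (h : x * k ∈ RingHom.ker S.p) :
    S.ψ ⟨x * k, h⟩ = S.p x • S.ψ ⟨k, hk⟩ := S.lin x ⟨k, hk⟩

theorem coeff_mem {k : MvPolynomial σ A'} (hk : MvPolynomial.map q k = 0) (m : σ →₀ ℕ) :
    coeff m k ∈ RingHom.ker q := by
  have := congrArg (coeff m) hk
  simpa [coeff_map] using this

theorem psi_F_monomial (S : DefSolution (B := MvPolynomial σ A) q φ) (m : σ →₀ ℕ) (c : A')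
    (hc : c ∈ RingHom.ker q) (h : F S (monomial m c) ∈ RingHom.ker S.p) :
    S.ψ ⟨F S (monomial m c), h⟩ = (monomial m (1 : A)) • φ ⟨c, hc⟩ := by
  have hmc : (monomial m c : MvPolynomial σ A') = monomial m 1 * C c := by
    rw [mul_comm, C_mul_monomial, mul_one]
  have e1 : F S (monomial m c) = F S (monomial m 1) * S.g c := by
    rw [hmc, map_mul, F_C]
  have hgc : S.g c ∈ RingHom.ker S.p := S.mem ⟨c, hc⟩
  rw [psi_congr S e1 h (e1 ▸ h), psi_lin' S _ _ hgc, p_F]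
  have : S.ψ ⟨S.g c, hgc⟩ = φ ⟨c, hc⟩ := S.compat ⟨c, hc⟩
  rw [this, map_monomial, map_one]

theorem psi_F_ker (S : DefSolution (B := MvPolynomial σ A) q φ) (k : MvPolynomial σ A')
    (hk : MvPolynomial.map q k = 0) (h : F S k ∈ RingHom.ker S.p) :
    S.ψ ⟨F S k, h⟩ =
      ∑ m ∈ k.support, (monomial m (1 : A)) • φ ⟨coeff m k, coeff_mem hk m⟩ := by
  have hmem : ∀ m : σ →₀ ℕ, m ∈ k.support →
      F S (monomial m (coeff m k)) ∈ RingHom.ker S.p := by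
    intro m _
    apply mem_ker_F
    rw [map_monomial]
    have : q (coeff m k) = 0 := coeff_mem hk m
    rw [this, monomial_zero]
  have hsum : (⟨F S k, h⟩ : RingHom.ker S.p)
      = ∑ m ∈ k.support.attach, ⟨F S (monomial m.1 (coeff m.1 k)), hmem m.1 m.2⟩ := by
    apply Subtype.ext
    push_cast
    rw [← map_sum]
    congr 1
    conv_lhs => rw [← support_sum_monomial_coeff k]
    rw [← Finset.sum_attach k.support fun m => monomial m (coeff m k)]
  rw [hsum, map_sum]
  rw [← Finset.sum_attach k.support fun m => (monomial m (1:A)) • φ ⟨coeff m k, coeff_mem hk m⟩]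
  exact Finset.sum_congr rfl fun m _ => psi_F_monomial S m.1 _ (coeff_mem hk m.1) _

theorem psi_F_ker_eq (S₁ S₂ : DefSolution (B := MvPolynomial σ A) q φ)
    (k : MvPolynomial σ A') (hk : MvPolynomial.map q k = 0)
    (h₁ : F S₁ k ∈ RingHom.ker S₁.p) (h₂ : F S₂ k ∈ RingHom.ker S₂.p) :
    S₁.ψ ⟨F S₁ k, h₁⟩ = S₂.ψ ⟨F S₂ k, h₂⟩ := by
  rw [psi_F_ker S₁ k hk h₁, psi_F_ker S₂ k hk h₂]

noncomputable def E (S : DefSolution (B := MvPolynomial σ A) q φ) :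
    RingHom.ker S.p ≃+ J := AddEquiv.ofBijective S.ψ S.bij

theorem E_apply (S : DefSolution (B := MvPolynomial σ A) q φ) (x : RingHom.ker S.p) :
    E S x = S.ψ x := rfl

noncomputable def sec (hq : Function.Surjective q) (b : MvPolynomial σ A) :
    MvPolynomial σ A' :=
  (MvPolynomial.map_surjective q hq b).choose

theorem map_sec (hq : Function.Surjective q) (b : MvPolynomial σ A) :
    MvPolynomial.map q (sec (σ := σ) hq b) = b :=
  (MvPolynomial.map_surjective q hq b).choose_spec

theorem sub_F_mem (S : DefSolution (B := MvPolynomial σ A) q φ) (x : S.carrier)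
    (w : MvPolynomial σ A') (hw : MvPolynomial.map q w = S.p x) :
    x - F S w ∈ RingHom.ker S.p := by
  rw [RingHom.mem_ker, map_sub, p_F, hw, sub_self]

noncomputable def t (hq : Function.Surjective q)
    (S₁ S₂ : DefSolution (B := MvPolynomial σ A) q φ) (x : S₁.carrier) : S₂.carrier :=
  F S₂ (sec hq (S₁.p x)) +
    ↑((E S₂).symm (S₁.ψ ⟨x - F S₁ (sec hq (S₁.p x)),
        sub_F_mem S₁ x _ (map_sec hq _)⟩))

theorem t_spec (hq : Function.Surjective q)
    (S₁ S₂ : DefSolution (B := MvPolynomial σ A) q φ) (x : S₁.carrier)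
    (w : MvPolynomial σ A') (hw : MvPolynomial.map q w = S₁.p x) :
    t hq S₁ S₂ x = F S₂ w +
      ↑((E S₂).symm (S₁.ψ ⟨x - F S₁ w, sub_F_mem S₁ x w hw⟩)) := by
  set w₀ := sec hq (S₁.p x) with hw₀def
  have hw₀ : MvPolynomial.map q w₀ = S₁.p x := map_sec hq _
  have hk : MvPolynomial.map q (w - w₀) = 0 := by rw [map_sub, hw, hw₀, sub_self]
  have h2 : ((E S₂).symm (S₁.ψ ⟨x - F S₁ w₀, sub_F_mem S₁ x w₀ hw₀⟩) : RingHom.ker S₂.p)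
      = (E S₂).symm (S₁.ψ ⟨x - F S₁ w, sub_F_mem S₁ x w hw⟩)
        + ⟨F S₂ (w - w₀), mem_ker_F S₂ hk⟩ := by
    apply (E S₂).injective
    rw [map_add, AddEquiv.apply_symm_apply, AddEquiv.apply_symm_apply, E_apply]
    rw [← psi_F_ker_eq S₁ S₂ (w - w₀) hk (mem_ker_F S₁ hk) (mem_ker_F S₂ hk)]
    rw [← psi_add S₁ _ _ _ _ (add_mem (sub_F_mem S₁ x w hw) (mem_ker_F S₁ hk))]
    apply psi_congr
    rw [map_sub]
    ring
  rw [t, h2]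
  push_cast
  rw [map_sub]
  ring

theorem p_t (hq : Function.Surjective q)
    (S₁ S₂ : DefSolution (B := MvPolynomial σ A) q φ) (x : S₁.carrier) :
    S₂.p (t hq S₁ S₂ x) = S₁.p x := by
  rw [t, map_add, p_coe_ker, add_zero, p_F, map_sec]

theorem t_t (hq : Function.Surjective q)
    (S₁ S₂ : DefSolution (B := MvPolynomial σ A) q φ) (x : S₁.carrier) :
    t hq S₂ S₁ (t hq S₁ S₂ x) = x := by
  set w₀ := sec hq (S₁.p x) with hw₀def
  have hw₀ : MvPolynomial.map q w₀ = S₁.p x := map_sec hq _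
  have h1 : MvPolynomial.map q w₀ = S₂.p (t hq S₁ S₂ x) := by rw [p_t, hw₀]
  rw [t_spec hq S₂ S₁ (t hq S₁ S₂ x) w₀ h1]
  have ht : t hq S₁ S₂ x - F S₂ w₀
      = ↑((E S₂).symm (S₁.ψ ⟨x - F S₁ w₀, sub_F_mem S₁ x _ (map_sec hq _)⟩)) := by
    rw [t]; ring
  have h3 : (⟨t hq S₁ S₂ x - F S₂ w₀, sub_F_mem S₂ _ w₀ h1⟩ : RingHom.ker S₂.p)
      = (E S₂).symm (S₁.ψ ⟨x - F S₁ w₀, sub_F_mem S₁ x _ (map_sec hq _)⟩) :=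
    Subtype.ext ht
  rw [← E_apply, h3, AddEquiv.apply_symm_apply, ← E_apply, AddEquiv.symm_apply_apply]
  push_cast
  ring

theorem t_add (hq : Function.Surjective q)
    (S₁ S₂ : DefSolution (B := MvPolynomial σ A) q φ) (x y : S₁.carrier) :
    t hq S₁ S₂ (x + y) = t hq S₁ S₂ x + t hq S₁ S₂ y := by
  have hx : MvPolynomial.map q (sec hq (S₁.p x)) = S₁.p x := map_sec hq _
  have hy : MvPolynomial.map q (sec hq (S₁.p y)) = S₁.p y := map_sec hq _
  have hxy : MvPolynomial.map q (sec hq (S₁.p x) + sec hq (S₁.p y)) = S₁.p (x + y) := by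
    rw [map_add, hx, hy, map_add]
  rw [t_spec hq S₁ S₂ (x + y) _ hxy, t_spec hq S₁ S₂ x _ hx, t_spec hq S₁ S₂ y _ hy]
  have hsplit : (x + y) - F S₁ (sec hq (S₁.p x) + sec hq (S₁.p y))
      = (x - F S₁ (sec hq (S₁.p x))) + (y - F S₁ (sec hq (S₁.p y))) := by
    rw [map_add]; ring
  rw [psi_congr S₁ hsplit _ (add_mem (sub_F_mem S₁ x _ hx) (sub_F_mem S₁ y _ hy)),
    psi_add S₁ _ _ (sub_F_mem S₁ x _ hx) (sub_F_mem S₁ y _ hy), map_add, map_add]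
  push_cast
  ring

theorem t_mul (hq : Function.Surjective q)
    (S₁ S₂ : DefSolution (B := MvPolynomial σ A) q φ) (x y : S₁.carrier) :
    t hq S₁ S₂ (x * y) = t hq S₁ S₂ x * t hq S₁ S₂ y := by
  set wx := sec hq (S₁.p x) with hwx
  set wy := sec hq (S₁.p y) with hwy
  have hx : MvPolynomial.map q wx = S₁.p x := map_sec hq _
  have hy : MvPolynomial.map q wy = S₁.p y := map_sec hq _
  have hxy : MvPolynomial.map q (wx * wy) = S₁.p (x * y) := by
    rw [map_mul, hx, hy, map_mul]
  rw [t_spec hq S₁ S₂ (x * y) _ hxy, t_spec hq S₁ S₂ x _ hx, t_spec hq S₁ S₂ y _ hy]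
  set r := (E S₂).symm (S₁.ψ ⟨x - F S₁ wx, sub_F_mem S₁ x wx hx⟩) with hrdef
  set s := (E S₂).symm (S₁.ψ ⟨y - F S₁ wy, sub_F_mem S₁ y wy hy⟩) with hsdef
  have hrs : (r : S₂.carrier) * ↑s = 0 := S₂.sq _ _ (p_coe_ker S₂ r) (p_coe_ker S₂ s)
  have m1 : F S₂ wx * ↑s ∈ RingHom.ker S₂.p := Ideal.mul_mem_left _ _ s.2
  have m2 : F S₂ wy * ↑r ∈ RingHom.ker S₂.p := Ideal.mul_mem_left _ _ r.2
  have main : ((E S₂).symm (S₁.ψ ⟨x * y - F S₁ (wx * wy), sub_F_mem S₁ _ _ hxy⟩)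
        : RingHom.ker S₂.p)
      = ⟨F S₂ wx * ↑s + F S₂ wy * ↑r, add_mem m1 m2⟩ := by
    apply (E S₂).injective
    rw [AddEquiv.apply_symm_apply, E_apply]
    rw [psi_add S₂ _ _ m1 m2, psi_lin' S₂ _ _ s.2, psi_lin' S₂ _ _ r.2]
    have hs2 : S₂.ψ ⟨↑s, s.2⟩ = S₁.ψ ⟨y - F S₁ wy, sub_F_mem S₁ y wy hy⟩ := by
      rw [← E_apply]
      exact (E S₂).apply_symm_apply _
    have hr2 : S₂.ψ ⟨↑r, r.2⟩ = S₁.ψ ⟨x - F S₁ wx, sub_F_mem S₁ x wx hx⟩ := by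
      rw [← E_apply]
      exact (E S₂).apply_symm_apply _
    rw [hs2, hr2, p_F, p_F]
    have hsplit : x * y - F S₁ (wx * wy)
        = x * (y - F S₁ wy) + F S₁ wy * (x - F S₁ wx) := by
      rw [map_mul]; ring
    have m3 : x * (y - F S₁ wy) ∈ RingHom.ker S₁.p :=
      Ideal.mul_mem_left _ _ (sub_F_mem S₁ y wy hy)
    have m4 : F S₁ wy * (x - F S₁ wx) ∈ RingHom.ker S₁.p :=
      Ideal.mul_mem_left _ _ (sub_F_mem S₁ x wx hx)
    rw [psi_congr S₁ hsplit _ (add_mem m3 m4), psi_add S₁ _ _ m3 m4,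
      psi_lin' S₁ _ _ (sub_F_mem S₁ y wy hy), psi_lin' S₁ _ _ (sub_F_mem S₁ x wx hx),
      p_F, hx]
  rw [main, map_mul]
  push_cast
  have expand : (F S₂ wx + (r : S₂.carrier)) * (F S₂ wy + ↑s)
      = F S₂ wx * F S₂ wy + (F S₂ wx * ↑s + F S₂ wy * ↑r) + ↑r * ↑s := by ring
  rw [expand, hrs, add_zero]

theorem t_g (hq : Function.Surjective q)
    (S₁ S₂ : DefSolution (B := MvPolynomial σ A) q φ) (a' : A') :
    t hq S₁ S₂ (S₁.g a') = S₂.g a' := by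
  have hw : MvPolynomial.map q (C a' : MvPolynomial σ A') = S₁.p (S₁.g a') := by
    have h2 := RingHom.congr_fun S₁.comm a'
    simp only [RingHom.comp_apply] at h2
    rw [map_C, h2, MvPolynomial.algebraMap_eq]
  rw [t_spec hq S₁ S₂ _ (C a') hw]
  have h0 : (⟨S₁.g a' - F S₁ (C a'), sub_F_mem S₁ _ _ hw⟩ : RingHom.ker S₁.p) = 0 :=
    Subtype.ext (by simp [F_C])
  rw [h0, map_zero, map_zero, ZeroMemClass.coe_zero, add_zero, F_C]

theorem t_psi (hq : Function.Surjective q)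
    (S₁ S₂ : DefSolution (B := MvPolynomial σ A) q φ) (x : RingHom.ker S₁.p)
    (h : t hq S₁ S₂ ↑x ∈ RingHom.ker S₂.p) :
    S₂.ψ ⟨t hq S₁ S₂ ↑x, h⟩ = S₁.ψ x := by
  have hw : MvPolynomial.map q (0 : MvPolynomial σ A') = S₁.p ↑x := by
    rw [map_zero, p_coe_ker]
  have ht : t hq S₁ S₂ ↑x
      = ↑((E S₂).symm (S₁.ψ ⟨↑x - F S₁ 0, sub_F_mem S₁ _ 0 hw⟩)) := by
    rw [t_spec hq S₁ S₂ _ 0 hw, map_zero, zero_add]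
  have h3 : (⟨t hq S₁ S₂ ↑x, h⟩ : RingHom.ker S₂.p)
      = (E S₂).symm (S₁.ψ ⟨↑x - F S₁ 0, sub_F_mem S₁ _ 0 hw⟩) := Subtype.ext ht
  rw [← E_apply, h3, AddEquiv.apply_symm_apply]
  apply psi_congr
  rw [map_zero, sub_zero]

noncomputable def theta (hq : Function.Surjective q)
    (S₁ S₂ : DefSolution (B := MvPolynomial σ A) q φ) : S₁.carrier ≃+* S₂.carrier where
  toFun := t hq S₁ S₂
  invFun := t hq S₂ S₁
  left_inv := t_t hq S₁ S₂
  right_inv := t_t hq S₂ S₁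
  map_mul' := t_mul hq S₁ S₂
  map_add' := t_add hq S₁ S₂

theorem theta_apply (hq : Function.Surjective q)
    (S₁ S₂ : DefSolution (B := MvPolynomial σ A) q φ) (x : S₁.carrier) :
    theta hq S₁ S₂ x = t hq S₁ S₂ x := rfl

end Stmt6Aux

/- STATEMENT 6: Let `q : A' → A` be a surjective ring homomorphism with square-zero kernel
`I`, `B = MvPolynomial σ A`, `J` a `B`-module, and `φ : I → J` an `A`-module homomorphism.
Any two solutions `(B'₁, p₁, g₁, ψ₁)` and `(B'₂, p₂, g₂, ψ₂)` of the deformation problem for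
`(q, B, J, φ)` are isomorphic: there is a ring isomorphism `θ : B'₁ ≃ B'₂` with
`p₂ ∘ θ = p₁`, `θ ∘ g₁ = g₂` and `ψ₂ (θ x) = ψ₁ x` for all `x ∈ ker p₁`. -/
theorem stmt6 {A' A : Type*} [CommRing A'] [CommRing A]
    (q : A' →+* A) (hq : Function.Surjective q)
    (hsqI : ∀ x y : A', q x = 0 → q y = 0 → x * y = 0)
    (σ : Type*) (J : Type*) [AddCommGroup J] [Module (MvPolynomial σ A) J]
    (φ : RingHom.ker q →+ J)
    (hφ : ∀ (a' : A') (i : RingHom.ker q),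
      φ ⟨a' * i, Ideal.mul_mem_left _ a' i.2⟩ = algebraMap A (MvPolynomial σ A) (q a') • φ i)
    (S₁ S₂ : DefSolution (B := MvPolynomial σ A) q φ) :
    ∃ θ : S₁.carrier ≃+* S₂.carrier,
      (∀ x : S₁.carrier, S₂.p (θ x) = S₁.p x) ∧
      (∀ a' : A', θ (S₁.g a') = S₂.g a') ∧
      (∀ (x : RingHom.ker S₁.p) (h : θ x ∈ RingHom.ker S₂.p),
        S₂.ψ ⟨θ x, h⟩ = S₁.ψ x) := by

  refine ⟨Stmt6Aux.theta hq S₁ S₂, fun x => ?_, fun a' => ?_, fun x h => ?_⟩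
  · rw [Stmt6Aux.theta_apply, Stmt6Aux.p_t]
  · rw [Stmt6Aux.theta_apply, Stmt6Aux.t_g]
  · exact Stmt6Aux.t_psi hq S₁ S₂ x h
end

section
/- Let q : A' → A be a surjective ring homomorphism whose kernel I satisfies I·I = 0, B a commutative A-algebra, J a B-module, and φ : I → J an A-module homomorphism. Let (B'₁, p₁, g₁, ψ₁) and (B'₂, p₂, g₂, ψ₂) be two solutions of the deformation problem for (q, B, J, φ), and let θ, θ' : B'₁ → B'₂ be two isomorphisms of solutions (ring isomorphisms satisfying p₂ ∘ θ = p₁, θ ∘ g₁ = g₂, ψ₂ ∘ θ = ψ₁ on ker p₁, and likewise for θ'). Then for each b ∈ B and any lift x ∈ B'₁ of b along p₁, the element θ(x) − θ'(x) lies in ker p₂, the value ψ₂(θ(x) − θ'(x)) ∈ J is independent of the choice of lift x, and the resulting map d : B → J, d(b) := ψ₂(θ(x) − θ'(x)), is an A-derivation. -/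
/- STATEMENT 7: Let `q : A' → A` be surjective with square-zero kernel `I`, `B` a commutative
`A`-algebra, `J` a `B`-module, `φ : I → J` an `A`-module homomorphism, and let `S₁`, `S₂` be
two solutions of the deformation problem for `(q, B, J, φ)`.  If `θ, θ' : B'₁ → B'₂` are two
isomorphisms of solutions, then for each `b : B` and any lift `x` of `b` along `p₁`, the
element `θ x - θ' x` lies in `ker p₂`, the value `ψ₂ (θ x - θ' x) ∈ J` is independent of the
choice of lift `x`, and the resulting map `d : B → J`, `d b := ψ₂ (θ x - θ' x)`, is an
`A`-derivation: additive, `A`-linear, and satisfying the Leibniz rule. -/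
theorem stmt7 {A' A B : Type*} [CommRing A'] [CommRing A] [CommRing B] [Algebra A B]
    (q : A' →+* A) (hq : Function.Surjective q)
    (hsqI : ∀ x y : A', q x = 0 → q y = 0 → x * y = 0)
    (J : Type*) [AddCommGroup J] [Module B J]
    (φ : RingHom.ker q →+ J)
    (hφ : ∀ (a' : A') (i : RingHom.ker q),
      φ ⟨a' * i, Ideal.mul_mem_left _ a' i.2⟩ = algebraMap A B (q a') • φ i)
    (S₁ S₂ : DefSolution (B := B) q φ)
    (θ θ' : S₁.carrier ≃+* S₂.carrier)
    (hθp : ∀ x : S₁.carrier, S₂.p (θ x) = S₁.p x)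
    (hθg : ∀ a' : A', θ (S₁.g a') = S₂.g a')
    (hθψ : ∀ (x : RingHom.ker S₁.p) (h : θ x ∈ RingHom.ker S₂.p), S₂.ψ ⟨θ x, h⟩ = S₁.ψ x)
    (hθ'p : ∀ x : S₁.carrier, S₂.p (θ' x) = S₁.p x)
    (hθ'g : ∀ a' : A', θ' (S₁.g a') = S₂.g a')
    (hθ'ψ : ∀ (x : RingHom.ker S₁.p) (h : θ' x ∈ RingHom.ker S₂.p),
      S₂.ψ ⟨θ' x, h⟩ = S₁.ψ x) :
    -- for any lift `x` of `b`, the difference `θ x - θ' x` lies in `ker p₂`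
    (∀ (b : B) (x : S₁.carrier), S₁.p x = b → θ x - θ' x ∈ RingHom.ker S₂.p) ∧
    -- the value `ψ₂ (θ x - θ' x)` does not depend on the choice of the lift `x` of `b`
    (∀ (b : B) (x y : S₁.carrier), S₁.p x = b → S₁.p y = b →
      ∀ (hx : θ x - θ' x ∈ RingHom.ker S₂.p) (hy : θ y - θ' y ∈ RingHom.ker S₂.p),
        S₂.ψ ⟨θ x - θ' x, hx⟩ = S₂.ψ ⟨θ y - θ' y, hy⟩) ∧
    -- the resulting map `d : B → J` is an `A`-derivation
    (∃ d : B → J,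
      (∀ (b : B) (x : S₁.carrier) (_ : S₁.p x = b)
        (h : θ x - θ' x ∈ RingHom.ker S₂.p), d b = S₂.ψ ⟨θ x - θ' x, h⟩) ∧
      (∀ b₁ b₂ : B, d (b₁ + b₂) = d b₁ + d b₂) ∧
      (∀ (a : A) (b : B), d (a • b) = algebraMap A B a • d b) ∧
      (∀ b₁ b₂ : B, d (b₁ * b₂) = b₁ • d b₂ + b₂ • d b₁)) := by
  classical
  have hmem : ∀ (b : B) (x : S₁.carrier), S₁.p x = b → θ x - θ' x ∈ RingHom.ker S₂.p := by
    intro b x hx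
    simp [RingHom.mem_ker, map_sub, hθp, hθ'p]
  have indep : ∀ (b : B) (x y : S₁.carrier), S₁.p x = b → S₁.p y = b →
      ∀ (hx : θ x - θ' x ∈ RingHom.ker S₂.p) (hy : θ y - θ' y ∈ RingHom.ker S₂.p),
        S₂.ψ ⟨θ x - θ' x, hx⟩ = S₂.ψ ⟨θ y - θ' y, hy⟩ := by
    intro b x y hx hy h1 h2
    have hk : x - y ∈ RingHom.ker S₁.p := by
      simp [RingHom.mem_ker, map_sub, hx, hy]
    have hθk : θ (x - y) ∈ RingHom.ker S₂.p := by
      rw [RingHom.mem_ker, hθp, map_sub, hx, hy, sub_self]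
    have hθ'k : θ' (x - y) ∈ RingHom.ker S₂.p := by
      rw [RingHom.mem_ker, hθ'p, map_sub, hx, hy, sub_self]
    have e1 : S₂.ψ ⟨θ (x - y), hθk⟩ = S₁.ψ ⟨x - y, hk⟩ := hθψ ⟨x - y, hk⟩ hθk
    have e2 : S₂.ψ ⟨θ' (x - y), hθ'k⟩ = S₁.ψ ⟨x - y, hk⟩ := hθ'ψ ⟨x - y, hk⟩ hθ'k
    have key : (⟨θ x - θ' x, h1⟩ : RingHom.ker S₂.p)
        = ⟨θ y - θ' y, h2⟩ + (⟨θ (x - y), hθk⟩ - ⟨θ' (x - y), hθ'k⟩) := by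
      ext
      simp only [AddSubmonoid.coe_add, AddSubgroup.coe_sub]
      push_cast
      simp only [map_sub]
      ring
    rw [key, map_add, map_sub, e1, e2]
    abel
  refine ⟨hmem, indep, ?_⟩
  set lift : B → S₁.carrier := fun b => (S₁.surj b).choose with hliftdef
  have hlift : ∀ b, S₁.p (lift b) = b := fun b => (S₁.surj b).choose_spec
  set d : B → J := fun b => S₂.ψ ⟨θ (lift b) - θ' (lift b), hmem b (lift b) (hlift b)⟩
    with hd
  have dspec : ∀ (b : B) (x : S₁.carrier) (_ : S₁.p x = b)
      (h : θ x - θ' x ∈ RingHom.ker S₂.p), d b = S₂.ψ ⟨θ x - θ' x, h⟩ := by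
    intro b x hx h
    exact indep b (lift b) x (hlift b) hx _ h
  refine ⟨d, dspec, ?_, ?_, ?_⟩
  · intro b₁ b₂
    have hx : S₁.p (lift b₁ + lift b₂) = b₁ + b₂ := by simp [hlift]
    rw [dspec (b₁ + b₂) _ hx (hmem _ _ hx)]
    have key : (⟨θ (lift b₁ + lift b₂) - θ' (lift b₁ + lift b₂),
        hmem _ _ hx⟩ : RingHom.ker S₂.p)
        = ⟨θ (lift b₁) - θ' (lift b₁), hmem b₁ _ (hlift b₁)⟩
          + ⟨θ (lift b₂) - θ' (lift b₂), hmem b₂ _ (hlift b₂)⟩ := by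
      ext
      simp only [AddSubmonoid.coe_add]
      push_cast
      simp only [map_add]
      ring
    rw [key, map_add]
  · intro a b
    obtain ⟨a', ha'⟩ := hq a
    have hga : S₁.p (S₁.g a') = algebraMap A B a := by
      have := RingHom.congr_fun S₁.comm a'
      simpa [ha'] using this
    have hx : S₁.p (S₁.g a' * lift b) = a • b := by
      simp [map_mul, hga, hlift, Algebra.smul_def]
    rw [dspec (a • b) _ hx (hmem _ _ hx)]
    have key : (⟨θ (S₁.g a' * lift b) - θ' (S₁.g a' * lift b),
        hmem _ _ hx⟩ : RingHom.ker S₂.p)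
        = ⟨S₂.g a' * ↑(⟨θ (lift b) - θ' (lift b), hmem b _ (hlift b)⟩ : RingHom.ker S₂.p),
            Ideal.mul_mem_left _ _ (hmem b _ (hlift b))⟩ := by
      ext
      simp only [map_mul, hθg, hθ'g]
      ring
    rw [key, S₂.lin]
    have hga2 : S₂.p (S₂.g a') = algebraMap A B a := by
      have := RingHom.congr_fun S₂.comm a'
      simpa [ha'] using this
    rw [hga2]
  · intro b₁ b₂
    have hx : S₁.p (lift b₁ * lift b₂) = b₁ * b₂ := by simp [map_mul, hlift]
    rw [dspec (b₁ * b₂) _ hx (hmem _ _ hx)]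
    have key : (⟨θ (lift b₁ * lift b₂) - θ' (lift b₁ * lift b₂),
        hmem _ _ hx⟩ : RingHom.ker S₂.p)
        = ⟨θ (lift b₁) * ↑(⟨θ (lift b₂) - θ' (lift b₂), hmem b₂ _ (hlift b₂)⟩ :
              RingHom.ker S₂.p),
            Ideal.mul_mem_left _ _ (hmem b₂ _ (hlift b₂))⟩
          + ⟨θ' (lift b₂) * ↑(⟨θ (lift b₁) - θ' (lift b₁), hmem b₁ _ (hlift b₁)⟩ :
              RingHom.ker S₂.p),
            Ideal.mul_mem_left _ _ (hmem b₁ _ (hlift b₁))⟩ := by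
      ext
      push_cast
      simp only [map_mul]
      ring
    rw [key, map_add, S₂.lin, S₂.lin, hθp, hθ'p, hlift, hlift]
end

section
/- Let A be a commutative ring and B an A-algebra, and let 𝒞 be the category of commutative A-algebras equipped with an A-algebra homomorphism to B. For each object (C, g) of 𝒞, let J(C, g) be the collection of sieves R on (C, g) such that for every finite subset Λ of C there exists a morphism f : (C', g') → (C, g) belonging to R with Λ contained in the set-theoretic image of f. Then J is a Grothendieck topology on 𝒞: each J(C, g) contains the maximal sieve, J is stable under pullback of sieves along morphisms, and J satisfies the local character axiom (if R ∈ J(C, g) and S is a sieve on (C, g) whose pullback along every morphism in R is covering, then S ∈ J(C, g)). -/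
open CategoryTheory

universe u

/-- The category `𝒞` of commutative `A`-algebras over `B`: objects are pairs `(C, g)` with
`C` a commutative `A`-algebra and `g : C → B` an `A`-algebra homomorphism. -/
structure AlgOver (A B : Type u) [CommRing A] [CommRing B] [Algebra A B] where
  carrier : Type u
  [ring : CommRing carrier]
  [alg : Algebra A carrier]
  hom : carrier →ₐ[A] B

attribute [instance] AlgOver.ring AlgOver.alg

variable (A B : Type u) [CommRing A] [CommRing B] [Algebra A B]

/-- Morphisms `(C₁, g₁) → (C₂, g₂)` are `A`-algebra homomorphisms `f : C₁ → C₂` with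
`g₂ ∘ f = g₁`. -/
instance : Category (AlgOver A B) where
  Hom X Y := {f : X.carrier →ₐ[A] Y.carrier // Y.hom.comp f = X.hom}
  id X := ⟨AlgHom.id A X.carrier, AlgHom.comp_id _⟩
  comp f g := ⟨g.1.comp f.1, by rw [← AlgHom.comp_assoc, g.2, f.2]⟩
  id_comp f := Subtype.ext (AlgHom.comp_id f.1)
  comp_id f := Subtype.ext (AlgHom.id_comp f.1)
  assoc f g h := Subtype.ext (AlgHom.comp_assoc h.1 g.1 f.1).symm

/-- A sieve `R` on `(C, g)` is covering if every finite subset `Λ ⊆ C` is contained in the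
set-theoretic image of some member of `R`. -/
def Covers {X : AlgOver A B} (S : Sieve X) : Prop :=
  ∀ Λ : Finset X.carrier, ∃ (Y : AlgOver A B) (f : Y ⟶ X),
    S f ∧ ∀ x ∈ Λ, x ∈ Set.range f.1

/- STATEMENT 8: The covering sieves just defined form a Grothendieck topology on the category
`𝒞` of commutative `A`-algebras over `B`: each `J(C, g)` contains the maximal sieve, the
collection is stable under pullback of sieves along morphisms, and it satisfies the local
character axiom. -/
theorem stmt8 :
    -- each `J(C, g)` contains the maximal sieve
    (∀ X : AlgOver A B, Covers A B (⊤ : Sieve X)) ∧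
    -- stability under pullback along morphisms
    (∀ (X Y : AlgOver A B) (f : Y ⟶ X) (S : Sieve X),
      Covers A B S → Covers A B (S.pullback f)) ∧
    -- local character: if `S` is covering and the pullback of `R` along every morphism of
    -- `S` is covering, then `R` is covering
    (∀ (X : AlgOver A B) (S R : Sieve X), Covers A B S →
      (∀ (Y : AlgOver A B) (f : Y ⟶ X), S f → Covers A B (R.pullback f)) →
      Covers A B R) := by
  classical
  refine ⟨?_, ?_, ?_⟩
  · intro X Λ
    exact ⟨X, 𝟙 X, trivial, fun x _ => ⟨x, rfl⟩⟩
  · intro X Y f S hS Λ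
    obtain ⟨W, h, hhS, hcov⟩ := hS (Λ.image f.1)
    -- fiber product of W and Y over X
    set P : Subalgebra A (W.carrier × Y.carrier) :=
      AlgHom.equalizer (h.1.comp (AlgHom.fst A W.carrier Y.carrier))
        (f.1.comp (AlgHom.snd A W.carrier Y.carrier)) with hP
    set Z : AlgOver A B :=
      ⟨P, Y.hom.comp ((AlgHom.snd A W.carrier Y.carrier).comp P.val)⟩ with hZ
    let pr2 : Z ⟶ Y := ⟨(AlgHom.snd A W.carrier Y.carrier).comp P.val, rfl⟩
    have hpr1 : W.hom.comp ((AlgHom.fst A W.carrier Y.carrier).comp P.val) = Z.hom := by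
      ext z
      have hz : h.1 z.1.1 = f.1 z.1.2 := z.2
      have h1 : X.hom (h.1 z.1.1) = W.hom z.1.1 := DFunLike.congr_fun h.2 z.1.1
      have h2 : X.hom (f.1 z.1.2) = Y.hom z.1.2 := DFunLike.congr_fun f.2 z.1.2
      show W.hom z.1.1 = Y.hom z.1.2
      rw [← h1, ← h2, hz]
    let pr1 : Z ⟶ W := ⟨(AlgHom.fst A W.carrier Y.carrier).comp P.val, hpr1⟩
    have hcomp : pr2 ≫ f = pr1 ≫ h := by
      apply Subtype.ext
      ext z
      show f.1 z.1.2 = h.1 z.1.1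
      exact (z.2 : h.1 z.1.1 = f.1 z.1.2).symm
    refine ⟨Z, pr2, ?_, ?_⟩
    · show S (pr2 ≫ f)
      rw [hcomp]
      exact S.downward_closed hhS pr1
    · intro x hx
      have : f.1 x ∈ Set.range h.1 := hcov (f.1 x) (Finset.mem_image_of_mem _ hx)
      obtain ⟨w, hw⟩ := this
      have hmem : (w, x) ∈ P := hw
      refine ⟨⟨(w, x), hmem⟩, ?_⟩
      show (AlgHom.snd A W.carrier Y.carrier) (P.val ⟨(w, x), hmem⟩) = x
      rfl
  · intro X S R hS hR Λ
    obtain ⟨Y, f, hfS, hf⟩ := hS Λ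
    set Λ' : Finset Y.carrier :=
      Λ.attach.image (fun x => (hf x.1 x.2).choose) with hΛ'
    obtain ⟨Z, g, hgR, hg⟩ := hR Y f hfS Λ'
    refine ⟨Z, g ≫ f, hgR, ?_⟩
    intro x hx
    have hy : (hf x hx).choose ∈ Λ' :=
      Finset.mem_image_of_mem _ (Λ.mem_attach ⟨x, hx⟩)
    obtain ⟨z, hz⟩ := hg _ hy
    refine ⟨z, ?_⟩
    show f.1 (g.1 z) = x
    rw [hz]
    exact (hf x hx).choose_spec
end

section
/- Let A be a commutative ring, B an A-algebra, J a B-module, and 𝒞 the category of A-algebras over B with the topology in which a sieve on (C, g) is covering if and only if every finite subset of C lies in the image of some member. Consider the presheaf F on 𝒞 defined by F(C, g) = Der_A(C, J) (A-derivations of C into J, where J is a C-module via g), with restriction along a morphism f : (C', g') → (C, g) given by d ↦ d ∘ f. Then F is a sheaf for this topology: for every object (C, g) and every covering sieve R of (C, g), the canonical map from F(C, g) to the set of compatible families of sections of F indexed by R is a bijection. -/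
open CategoryTheory

universe u

variable (A B : Type u) [CommRing A] [CommRing B] [Algebra A B]

variable (J : Type u) [AddCommGroup J] [Module B J] [Module A J] [IsScalarTower A B J]

/-- The presheaf `F` on `𝒞` with `F(C, g) = Der_A(C, J)`, the set of `A`-derivations of `C`
with values in `J` (a `C`-module via `g`), with restriction along `f : (C', g') → (C, g)`
given by `d ↦ d ∘ f`. -/
def DerPresheaf : (AlgOver A B)ᵒᵖ ⥤ Type u where
  obj X := {d : X.unop.carrier → J //
    (∀ c₁ c₂ : X.unop.carrier, d (c₁ + c₂) = d c₁ + d c₂) ∧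
    (∀ (a : A) (c : X.unop.carrier), d (a • c) = a • d c) ∧
    (∀ c₁ c₂ : X.unop.carrier,
      d (c₁ * c₂) = X.unop.hom c₁ • d c₂ + X.unop.hom c₂ • d c₁)}
  map {X Y} f := TypeCat.ofHom fun d => ⟨d.1 ∘ f.unop.1, by
    obtain ⟨d, h1, h2, h3⟩ := d
    refine ⟨fun c₁ c₂ => ?_, fun a c => ?_, fun c₁ c₂ => ?_⟩
    · simp only [Function.comp_apply, map_add, h1]
    · simp only [Function.comp_apply, map_smul, h2]
    · simp only [Function.comp_apply, map_mul, h3]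
      rw [← AlgHom.congr_fun f.unop.2 c₁, ← AlgHom.congr_fun f.unop.2 c₂]
      rfl⟩
  map_id X := rfl
  map_comp f g := rfl

section Aux

variable {A B} {X Y₁ Y₂ : AlgOver A B} (f₁ : Y₁ ⟶ X) (f₂ : Y₂ ⟶ X)

/-- The fiber product of `Y₁` and `Y₂` over `X`. -/
def fprod : AlgOver A B where
  carrier := AlgHom.equalizer (f₁.1.comp (AlgHom.fst A Y₁.carrier Y₂.carrier))
    (f₂.1.comp (AlgHom.snd A Y₁.carrier Y₂.carrier))
  hom := Y₁.hom.comp ((AlgHom.fst A Y₁.carrier Y₂.carrier).comp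
    (AlgHom.equalizer (f₁.1.comp (AlgHom.fst A Y₁.carrier Y₂.carrier))
      (f₂.1.comp (AlgHom.snd A Y₁.carrier Y₂.carrier))).val)

/-- First projection from the fiber product. -/
def fprodFst : fprod f₁ f₂ ⟶ Y₁ :=
  ⟨(AlgHom.fst A Y₁.carrier Y₂.carrier).comp (Subalgebra.val _), rfl⟩

lemma hom_eq_on_fprod (p : (fprod f₁ f₂).carrier) :
    Y₂.hom p.1.2 = Y₁.hom p.1.1 := by
  have h := p.2
  have h1 := AlgHom.congr_fun f₁.2 p.1.1
  have h2 := AlgHom.congr_fun f₂.2 p.1.2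
  simp only [AlgHom.coe_comp, Function.comp_apply] at h1 h2 ⊢
  rw [← h1, ← h2]
  exact congrArg X.hom h.symm

/-- Second projection from the fiber product. -/
def fprodSnd : fprod f₁ f₂ ⟶ Y₂ :=
  ⟨(AlgHom.snd A Y₁.carrier Y₂.carrier).comp (Subalgebra.val _), by
    ext p
    exact hom_eq_on_fprod f₁ f₂ p⟩

lemma fprod_comm : fprodFst f₁ f₂ ≫ f₁ = fprodSnd f₁ f₂ ≫ f₂ :=
  Subtype.ext (AlgHom.ext fun p => p.2)

end Aux

/- STATEMENT 11: The presheaf `F = DerPresheaf` with `F(C, g) = Der_A(C, J)` is a sheaf for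
the topology whose covering sieves are described by `Covers`: for every object `(C, g)` and
every covering sieve `R` of `(C, g)`, the canonical map from `F(C, g)` to the set of
compatible families of sections of `F` indexed by `R` is a bijection. -/
theorem stmt11 (X : AlgOver A B) (R : Sieve X) (hR : Covers A B R) :
    Presieve.IsSheafFor (DerPresheaf A B J) R.arrows := by
  intro x hx
  classical
  -- key: well-definedness
  have key : ∀ {Y₁ Y₂ : AlgOver A B} (f₁ : Y₁ ⟶ X) (f₂ : Y₂ ⟶ X)
      (h₁ : R.arrows f₁) (h₂ : R.arrows f₂) (y₁ : Y₁.carrier) (y₂ : Y₂.carrier),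
      f₁.1 y₁ = f₂.1 y₂ → (x f₁ h₁).1 y₁ = (x f₂ h₂).1 y₂ := by
    intro Y₁ Y₂ f₁ f₂ h₁ h₂ y₁ y₂ hy
    have hc := hx (fprodFst f₁ f₂) (fprodSnd f₁ f₂) h₁ h₂ (fprod_comm f₁ f₂)
    have := congrFun (congrArg Subtype.val hc) ⟨(y₁, y₂), hy⟩
    exact this
  -- choose covers
  choose Y F hF hmem using hR
  have hy : ∀ (Λ : Finset X.carrier) (c : X.carrier), c ∈ Λ →
      ∃ y : (Y Λ).carrier, (F Λ).1 y = c := fun Λ c hc => hmem Λ c hc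
  choose yy hyy using hy
  have hy : ∀ (Λ : Finset X.carrier) (c : X.carrier), c ∈ Λ →
      ∃ y : (Y Λ).carrier, (F Λ).1 y = c := fun Λ c hc => ⟨yy Λ c hc, hyy Λ c hc⟩
  set d : X.carrier → J := fun c =>
    (x (F {c}) (hF {c})).1 (yy {c} c (Finset.mem_singleton_self c)) with hd
  have dspec : ∀ {Y' : AlgOver A B} (f : Y' ⟶ X) (h : R.arrows f) (y : Y'.carrier),
      d (f.1 y) = (x f h).1 y := by
    intro Y' f h y
    exact key (F _) f (hF _) h _ y (hyy _ _ _)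
  -- d is a derivation
  have hadd : ∀ c₁ c₂ : X.carrier, d (c₁ + c₂) = d c₁ + d c₂ := by
    intro c₁ c₂
    obtain ⟨y₁, hy₁⟩ := hy {c₁, c₂} c₁ (by simp)
    obtain ⟨y₂, hy₂⟩ := hy {c₁, c₂} c₂ (by simp)
    have dc₁ := dspec (F {c₁, c₂}) (hF _) y₁; rw [hy₁] at dc₁
    have dc₂ := dspec (F {c₁, c₂}) (hF _) y₂; rw [hy₂] at dc₂
    have dc := dspec (F {c₁, c₂}) (hF _) (y₁ + y₂)
    rw [map_add, hy₁, hy₂] at dc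
    rw [dc, dc₁, dc₂]
    exact (x (F {c₁, c₂}) (hF _)).2.1 y₁ y₂
  have hsmul : ∀ (a : A) (c : X.carrier), d (a • c) = a • d c := by
    intro a c
    obtain ⟨y, hy'⟩ := hy {c} c (by simp)
    have dc := dspec (F {c}) (hF _) y; rw [hy'] at dc
    have dac := dspec (F {c}) (hF _) (a • y)
    rw [map_smul, hy'] at dac
    rw [dac, dc]
    exact (x (F {c}) (hF _)).2.2.1 a y
  have hmul : ∀ c₁ c₂ : X.carrier,
      d (c₁ * c₂) = X.hom c₁ • d c₂ + X.hom c₂ • d c₁ := by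
    intro c₁ c₂
    obtain ⟨y₁, hy₁⟩ := hy {c₁, c₂} c₁ (by simp)
    obtain ⟨y₂, hy₂⟩ := hy {c₁, c₂} c₂ (by simp)
    have dc₁ := dspec (F {c₁, c₂}) (hF _) y₁; rw [hy₁] at dc₁
    have dc₂ := dspec (F {c₁, c₂}) (hF _) y₂; rw [hy₂] at dc₂
    have dc := dspec (F {c₁, c₂}) (hF _) (y₁ * y₂)
    rw [map_mul, hy₁, hy₂] at dc
    have hh₁ := AlgHom.congr_fun (F {c₁, c₂}).2 y₁
    have hh₂ := AlgHom.congr_fun (F {c₁, c₂}).2 y₂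
    simp only [AlgHom.coe_comp, Function.comp_apply] at hh₁ hh₂
    rw [hy₁] at hh₁; rw [hy₂] at hh₂
    rw [dc, dc₁, dc₂, (x (F {c₁, c₂}) (hF _)).2.2.2 y₁ y₂, ← hh₁, ← hh₂]
  refine ⟨⟨d, hadd, hsmul, hmul⟩, fun Y' f h => ?_, fun t ht => ?_⟩
  · exact Subtype.ext (funext fun y => dspec f h y)
  · refine Subtype.ext (funext fun c => ?_)
    obtain ⟨y, hy'⟩ := hy {c} c (by simp)
    have dc := dspec (F {c}) (hF _) y; rw [hy'] at dc
    have ht' : t.1 ((F {c}).1 y) = (x (F {c}) (hF _)).1 y :=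
      congrFun (congrArg Subtype.val (ht (F {c}) (hF _))) y
    rw [hy'] at ht'
    exact ht'.trans dc.symm
end

section
/- Let A be a commutative ring, B an A-algebra, and p : B' → B a surjective A-algebra homomorphism with square-zero kernel. Let 𝒞 be the category of A-algebras over B with the topology in which a sieve on (C, g) is covering if and only if every finite subset of C lies in the image of some member. Then for every object (C, g) of 𝒞, the sieve on (C, g) consisting of all morphisms f : (D, h) → (C, g) such that there exists an A-algebra homomorphism h' : D → B' with p ∘ h' = h is a covering sieve. (In other words, the square-zero extension B' of B splits locally in this topology.) -/
open CategoryTheory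

universe u

variable (A B : Type u) [CommRing A] [CommRing B] [Algebra A B]

/- STATEMENT 12: Let `p : B' → B` be a surjective `A`-algebra homomorphism with square-zero
kernel.  For every object `(C, g)` of `𝒞`, the sieve consisting of all morphisms
`f : (D, h) → (C, g)` such that `h : D → B` lifts to an `A`-algebra homomorphism
`h' : D → B'` with `p ∘ h' = h` is a covering sieve: the square-zero extension `B'` of `B`
splits locally in this topology. -/
theorem stmt12 {B' : Type u} [CommRing B'] [Algebra A B'] (p : B' →ₐ[A] B)
    (hp : Function.Surjective p)
    (hsq : ∀ x y : B', p x = 0 → p y = 0 → x * y = 0)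
    (X : AlgOver A B) :
    Covers A B (X := X)
      { arrows := fun Y _f => ∃ h' : Y.carrier →ₐ[A] B', p.comp h' = Y.hom
        downward_closed := by
          rintro Y Z f ⟨h', hh'⟩ g
          exact ⟨h'.comp g.1, by rw [← AlgHom.comp_assoc, hh', g.2]⟩ } := by
  intro Λ
  choose lift hlift using hp
  let Y : AlgOver A B :=
    { carrier := MvPolynomial {x // x ∈ Λ} A
      hom := X.hom.comp (MvPolynomial.aeval (fun x : {x // x ∈ Λ} => (x : X.carrier))) }
  refine ⟨Y, ⟨MvPolynomial.aeval (fun x : {x // x ∈ Λ} => (x : X.carrier)), rfl⟩, ?_, ?_⟩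
  · refine ⟨MvPolynomial.aeval (fun x : {x // x ∈ Λ} => lift (X.hom x)), ?_⟩
    apply MvPolynomial.algHom_ext
    intro i
    simp [Y, hlift]
  · intro x hx
    exact ⟨MvPolynomial.X ⟨x, hx⟩, by exact MvPolynomial.aeval_X _ _⟩
end

section
/- On the category of types (in a fixed universe), declare a sieve R on a type T to be covering if for every finite subset Λ of T there exists a map f : S → T belonging to R with Λ contained in the range of f. Then: (i) these covering sieves form a Grothendieck topology on the category of types; and (ii) the restriction functor along the inclusion of the category of finite types into the category of all types induces an equivalence between the category of sheaves of types for this topology and the category of presheaves of types on the category of finite types. -/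
open CategoryTheory

universe u

namespace Stmt14

open Opposite

/-- `op` of a bare function, seen as a morphism in `Type u`. -/
abbrev oph {X Y : Type u} (f : X → Y) : op Y ⟶ op X := Quiver.Hom.op (TypeCat.ofHom f)

/-- The covering condition. -/
def covers (T : Type u) (R : Sieve T) : Prop :=
  ∀ Λ : Finset T, ∃ (S : Type u) (f : S ⟶ T), R f ∧ ∀ t ∈ Λ, t ∈ Set.range f

/-- The Grothendieck topology on `Type u` whose covering sieves are those containing, for each
finite subset, a map whose range contains it. -/
def K : GrothendieckTopology (Type u) where
  sieves T R := covers T R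
  top_mem' T Λ := ⟨T, 𝟙 T, trivial, fun t _ => ⟨t, rfl⟩⟩
  pullback_stable' := by
    intro T U R g hR Λ
    classical
    obtain ⟨S, f, hf, hcov⟩ := hR (Λ.image g)
    refine ⟨{p : S × U // f p.1 = g p.2}, TypeCat.ofHom fun p => p.1.2, ?_, ?_⟩
    · show R ((TypeCat.ofHom fun p : {p : S × U // f p.1 = g p.2} => p.1.2) ≫ g)
      have : ((TypeCat.ofHom fun p : {p : S × U // f p.1 = g p.2} => p.1.2) ≫ g)
          = (TypeCat.ofHom fun p : {p : S × U // f p.1 = g p.2} => p.1.1) ≫ f := by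
        ext p; exact p.2.symm
      rw [this]
      exact R.downward_closed hf _
    · intro t ht
      obtain ⟨s, hs⟩ := hcov (g t) (Finset.mem_image_of_mem g ht)
      exact ⟨⟨(s, t), hs⟩, rfl⟩
  transitive' := by
    intro T R hR S hS Λ
    classical
    obtain ⟨A, f, hf, hcov⟩ := hR Λ
    have hsel : ∀ t : {t // t ∈ Λ}, ∃ a : A, f a = t.1 := fun t => hcov t.1 t.2
    obtain ⟨B, g, hg, hcov'⟩ := hS hf (Λ.attach.image fun t => (hsel t).choose)
    refine ⟨B, g ≫ f, hg, ?_⟩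
    intro t ht
    obtain ⟨b, hb⟩ := hcov' (hsel ⟨t, ht⟩).choose
      (Finset.mem_image_of_mem _ (Finset.mem_attach _ ⟨t, ht⟩))
    refine ⟨b, ?_⟩
    show f (g b) = t
    rw [hb, (hsel ⟨t, ht⟩).choose_spec]

/-! ### Compatible families indexed by maps from finite types -/

/-- Shorthand for the inclusion of the skeleton. -/
abbrev sk (n : FintypeCat.Skeleton.{u}) : FintypeCat.{u} := FintypeCat.Skeleton.incl.obj n

variable (G : FintypeCat.{u}ᵒᵖ ⥤ Type u)

/-- Compatibility of a family indexed by maps from skeletal finite types to `T`. -/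
def IsCompat {T : Type u} (y : ∀ n : FintypeCat.Skeleton.{u}, (↥(sk n) → T) →
    G.obj (op (sk n))) : Prop :=
  ∀ (n n' : FintypeCat.Skeleton.{u}) (φ : sk n' ⟶ sk n) (v : ↥(sk n) → T),
    y n' (fun a => v (φ a)) = G.map φ.op (y n v)

/-- The type of compatible families over `T` with values in `G`. -/
def Fam (T : Type u) : Type u :=
  {y : ∀ n : FintypeCat.Skeleton.{u}, (↥(sk n) → T) → G.obj (op (sk n)) //
    IsCompat G y}

/-- The presheaf of compatible families (the right Kan extension of `G`, concretely). -/
def E : (Type u)ᵒᵖ ⥤ Type u where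
  obj T := Fam G (unop T)
  map {T T'} g := TypeCat.ofHom fun y => ⟨fun n u => y.1 n (fun a => g.unop (u a)),
    fun n n' φ v => y.2 n n' φ (fun a => g.unop (v a))⟩
  map_id := by intros; rfl
  map_comp := by intros; rfl

noncomputable def toSk (A : FintypeCat.{u}) : FintypeCat.Skeleton.{u} :=
  FintypeCat.Skeleton.equivalence.inverse.obj A

noncomputable def toSkIso (A : FintypeCat.{u}) : sk (toSk A) ≅ A :=
  FintypeCat.Skeleton.equivalence.counitIso.app A

variable {G}

/-- The component of a compatible family at an arbitrary finite type. -/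
noncomputable def Fam.app' {T : Type u} (y : Fam G T) (A : FintypeCat.{u})
    (u : ↥A → T) : G.obj (op A) :=
  G.map (toSkIso A).inv.op (y.1 (toSk A) (fun a => u ((toSkIso A).hom a)))

lemma Fam.compat' {T : Type u} (y : Fam G T) {A B : FintypeCat.{u}} (φ : A ⟶ B)
    (u : ↥B → T) :
    y.app' A (fun a => u (φ a)) = G.map φ.op (y.app' B u) := by
  set eA := toSkIso A
  set eB := toSkIso B
  have h1 := y.2 (toSk B) (toSk A) (eA.hom ≫ φ ≫ eB.inv) (fun b => u (eB.hom b))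
  have hfun : (fun a => u (eB.hom ((eA.hom ≫ φ ≫ eB.inv) a)))
      = fun a => u (φ (eA.hom a)) := by
    funext a
    show u (eB.hom (eB.inv (φ (eA.hom a)))) = u (φ (eA.hom a))
    rw [FintypeCat.inv_hom_id_apply]
  rw [hfun] at h1
  show G.map eA.inv.op (y.1 (toSk A) (fun a => u (φ (eA.hom a)))) = _
  rw [h1, ← FunctorToTypes.map_comp_apply]
  show _ = G.map φ.op (G.map eB.inv.op (y.1 (toSk B) (fun b => u (eB.hom b))))
  rw [← FunctorToTypes.map_comp_apply, ← op_comp, ← op_comp]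
  simp

lemma Fam.app'_sk {T : Type u} (y : Fam G T) (n : FintypeCat.Skeleton.{u})
    (u : ↥(sk n) → T) :
    y.app' (sk n) u = y.1 n u := by
  have h := y.2 n (toSk (sk n)) ((toSkIso (sk n)).hom) u
  show G.map (toSkIso (sk n)).inv.op (y.1 (toSk (sk n)) (fun a => u ((toSkIso (sk n)).hom a)))
      = y.1 n u
  rw [h, ← FunctorToTypes.map_comp_apply, ← op_comp, Iso.inv_hom_id, op_id,
    FunctorToTypes.map_id_apply]

lemma Fam.app'_map {T T' : Type u} (g : T ⟶ T') (y : Fam G T') (A : FintypeCat.{u})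
    (u : ↥A → T) :
    ((E G).map g.op y).app' A u = y.app' A (fun a => g (u a)) := rfl

@[ext]
lemma Fam.ext {T : Type u} {y z : Fam G T}
    (h : ∀ n u, y.1 n u = z.1 n u) : y = z :=
  Subtype.ext (funext fun n => funext fun u => h n u)

/-! ### The canonical map from a presheaf on types to families -/

variable {F F' : (Type u)ᵒᵖ ⥤ Type u}

/-- The canonical comparison map sending `x` to the family of its restrictions. -/
def theta {T : Type u} (x : F.obj (op T)) : Fam (FintypeCat.incl.op ⋙ F) T :=
  ⟨fun n u => F.map (oph u) x, by
    intro n n' φ v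
    exact FunctorToTypes.map_comp_apply F (oph v) ((FintypeCat.incl.map φ).op) x⟩

lemma theta_app' {T : Type u} (x : F.obj (op T)) (A : FintypeCat.{u})
    (u : ↥A → T) :
    (theta x).app' A u = F.map (oph u) x := by
  show F.map ((FintypeCat.incl.map (toSkIso A).inv).op)
      (F.map (oph fun a => u ((toSkIso A).hom a)) x) = F.map (oph u) x
  rw [← FunctorToTypes.map_comp_apply]
  have : (fun a => u ((toSkIso A).hom ((toSkIso A).inv a))) = u :=
    funext fun a => by rw [FintypeCat.inv_hom_id_apply]
  exact ConcreteCategory.congr_hom (congrArg (fun v : ↥A → T => F.map (oph v)) this) x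

lemma theta_natural {T T' : Type u} (g : T ⟶ T') (x : F.obj (op T')) :
    theta (F.map g.op x) = (E (FintypeCat.incl.op ⋙ F)).map g.op (theta x) := by
  apply Fam.ext
  intro n u
  show F.map (oph u) (F.map g.op x) = F.map (oph fun a => g (u a)) x
  exact (FunctorToTypes.map_comp_apply F g.op (oph u) x).symm

/-! ### The sieve of maps with finite range -/

/-- The sieve of maps with finite range. -/
def Rfin (T : Type u) : Sieve T where
  arrows S f := (Set.range f).Finite
  downward_closed := by
    intro S Z f hf g
    exact hf.subset (Set.range_comp_subset_range g f)

lemma Rfin_mem (T : Type u) : Rfin T ∈ (K) T := by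
  intro Λ
  refine ⟨{x // x ∈ Λ}, TypeCat.ofHom Subtype.val, ?_, fun t ht => ⟨⟨t, ht⟩, rfl⟩⟩
  haveI : Finite {x // x ∈ Λ} := Λ.finite_toSet.to_subtype
  exact Set.finite_range _

/-- The finite type given by the range of a map with finite range. -/
noncomputable def rngObj {S T : Type u} (f : S ⟶ T) (hf : (Set.range f).Finite) :
    FintypeCat.{u} :=
  @FintypeCat.of (Set.range f) hf.to_subtype

noncomputable def rngIncl {S T : Type u} (f : S ⟶ T) (hf : (Set.range f).Finite) :
    ↥(rngObj f hf) → T :=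
  Subtype.val

noncomputable def rngFac {S T : Type u} (f : S ⟶ T) (hf : (Set.range f).Finite) :
    S → ↥(rngObj f hf) :=
  fun s => ⟨f s, Set.mem_range_self s⟩

/-! ### The key bijectivity of `theta` for sheaves -/

theorem theta_bijective (hF : Presieve.IsSheaf (K) F) (T : Type u) :
    Function.Bijective (fun x : F.obj (op T) => theta x) := by
  have hsep := (hF (Rfin T) (Rfin_mem T)).isSeparatedFor
  constructor
  · -- injectivity
    intro x₁ x₂ h
    apply hsep.ext
    intro S f hf
    have h' : F.map (oph (rngIncl f hf)) x₁ = F.map (oph (rngIncl f hf)) x₂ := by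
      have e1 : (theta x₁).app' (rngObj f hf) (rngIncl f hf)
          = (theta x₂).app' (rngObj f hf) (rngIncl f hf) :=
        congrArg (fun z => Fam.app' z (rngObj f hf) (rngIncl f hf)) h
      rw [theta_app', theta_app'] at e1
      exact e1
    calc F.map f.op x₁
        = F.map (oph (rngFac f hf)) (F.map (oph (rngIncl f hf)) x₁) :=
          FunctorToTypes.map_comp_apply F (oph (rngIncl f hf)) (oph (rngFac f hf)) x₁
      _ = F.map (oph (rngFac f hf)) (F.map (oph (rngIncl f hf)) x₂) := by rw [h']
      _ = F.map f.op x₂ :=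
          (FunctorToTypes.map_comp_apply F (oph (rngIncl f hf)) (oph (rngFac f hf)) x₂).symm
  · -- surjectivity
    intro y
    -- the family of elements over the sieve of maps with finite range
    let xf : Presieve.FamilyOfElements F (Rfin T).arrows := fun S f hf =>
      F.map (oph (rngFac f hf)) (y.app' (rngObj f hf) (rngIncl f hf))
    -- key computation
    have key : ∀ {Z S : Type u} (g : Z ⟶ S) (f : S ⟶ T) (hf : (Set.range f).Finite)
        (hh : (Set.range (g ≫ f)).Finite),
        F.map g.op (xf f hf) = F.map (oph (rngFac (g ≫ f) hh))
          (y.app' (rngObj (g ≫ f) hh) (rngIncl (g ≫ f) hh)) := by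
      intro Z S g f hf hh
      have hsub : Set.range (g ≫ f) ⊆ Set.range f := Set.range_comp_subset_range g f
      let j : rngObj (g ≫ f) hh ⟶ rngObj f hf := FintypeCat.homMk (Set.inclusion hsub)
      have hy := y.compat' (A := rngObj (g ≫ f) hh) (B := rngObj f hf) j (rngIncl f hf)
      have hfun : (fun a => rngIncl f hf (j a)) = rngIncl (g ≫ f) hh := rfl
      rw [hfun] at hy
      rw [hy]
      show F.map g.op (F.map (oph (rngFac f hf)) (y.app' (rngObj f hf) (rngIncl f hf)))
          = F.map (oph (rngFac (g ≫ f) hh))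
              (F.map ((FintypeCat.incl.map j).op)
                (y.app' (rngObj f hf) (rngIncl f hf)))
      rw [← FunctorToTypes.map_comp_apply, ← FunctorToTypes.map_comp_apply]
      have hmor : oph (rngFac f hf) ≫ g.op
          = (FintypeCat.incl.map j).op ≫ oph (rngFac (g ≫ f) hh) := by
        have hfn : (fun z => rngFac f hf (g z)) = (fun z => j (rngFac (g ≫ f) hh z)) := by
          funext z
          apply Subtype.ext
          rfl
        show oph (fun z => rngFac f hf (g z)) = oph (fun z => j (rngFac (g ≫ f) hh z))
        exact congrArg oph hfn
      rw [hmor]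
    have hcompat : xf.Compatible := by
      intro Y₁ Y₂ Z g₁ g₂ f₁ f₂ h₁ h₂ comm
      have hh : (Set.range (g₁ ≫ f₁)).Finite :=
        h₁.subset (Set.range_comp_subset_range g₁ f₁)
      have hh' : (Set.range (g₂ ≫ f₂)).Finite := by rw [← comm]; exact hh
      rw [key g₁ f₁ h₁ hh, key g₂ f₂ h₂ hh']
      revert hh'
      rw [← comm]
      intro hh'
      rfl
    obtain ⟨t, ht, -⟩ := hF (Rfin T) (Rfin_mem T) xf hcompat
    refine ⟨t, ?_⟩
    apply Fam.ext
    intro n u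
    have hu : (Rfin T).arrows (TypeCat.ofHom u : ↥(sk n) ⟶ T) := Set.finite_range u
    calc F.map (oph u) t
        = xf (TypeCat.ofHom u) hu := ht (TypeCat.ofHom u) hu
      _ = y.app' (sk n) u :=
          (y.compat' (FintypeCat.homMk (rngFac (TypeCat.ofHom u) hu) : sk n ⟶ rngObj _ hu)
            (rngIncl _ hu)).symm
      _ = y.1 n u := Fam.app'_sk y n u

/-! ### `E G` is a sheaf -/

theorem E_isSheaf (G : FintypeCat.{u}ᵒᵖ ⥤ Type u) : Presieve.IsSheaf (K) (E G) := by
  intro T R hR x hx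
  -- choose, for each finite map `u` into `T`, a covering map and a lift
  have lift : ∀ (n : FintypeCat.Skeleton.{u}) (u : ↥(sk n) → T),
      ∃ (S : Type u) (f : S ⟶ T) (_ : R f) (w : ↥(sk n) → S),
        ∀ a, f (w a) = u a := by
    intro n u
    classical
    letI : Fintype ↥(sk n) := Fintype.ofFinite _
    obtain ⟨S, f, hf, hcov⟩ := hR (Finset.univ.image u)
    have hw : ∀ a : ↥(sk n), ∃ s : S, f s = u a := by
      intro a
      obtain ⟨s, hs⟩ := hcov (u a) (Finset.mem_image_of_mem u (Finset.mem_univ a))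
      exact ⟨s, hs⟩
    exact ⟨S, f, hf, fun a => (hw a).choose, fun a => (hw a).choose_spec⟩
  -- independence of the choices
  have indep : ∀ (n : FintypeCat.Skeleton.{u}) (u : ↥(sk n) → T)
      {S₁ S₂ : Type u} (f₁ : S₁ ⟶ T) (f₂ : S₂ ⟶ T) (h₁ : R f₁) (h₂ : R f₂)
      (w₁ : ↥(sk n) → S₁) (w₂ : ↥(sk n) → S₂),
      (∀ a, f₁ (w₁ a) = u a) → (∀ a, f₂ (w₂ a) = u a) →
      (x f₁ h₁).1 n w₁ = (x f₂ h₂).1 n w₂ := by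
    intro n u S₁ S₂ f₁ f₂ h₁ h₂ w₁ w₂ hw₁ hw₂
    have comm : (TypeCat.ofHom fun p : {p : S₁ × S₂ // f₁ p.1 = f₂ p.2} => p.1.1) ≫ f₁
        = (TypeCat.ofHom fun p : {p : S₁ × S₂ // f₁ p.1 = f₂ p.2} => p.1.2) ≫ f₂ := by
      ext p; exact p.2
    have hcomp := hx (TypeCat.ofHom fun p : {p : S₁ × S₂ // f₁ p.1 = f₂ p.2} => p.1.1)
      (TypeCat.ofHom fun p : {p : S₁ × S₂ // f₁ p.1 = f₂ p.2} => p.1.2) h₁ h₂ comm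
    exact congr_arg (fun z : Fam G {p : S₁ × S₂ // f₁ p.1 = f₂ p.2} => z.1 n
      (fun a => (⟨(w₁ a, w₂ a), by rw [hw₁ a, hw₂ a]⟩ :
        {p : S₁ × S₂ // f₁ p.1 = f₂ p.2}))) hcomp
  -- define the amalgamation
  refine ⟨⟨fun n u => (x (lift n u).choose_spec.choose
      (lift n u).choose_spec.choose_spec.choose).1 n
      (lift n u).choose_spec.choose_spec.choose_spec.choose, ?_⟩, ?_, ?_⟩
  · -- compatibility
    intro n n' φ v
    have hwspec : ∀ a, (lift n v).choose_spec.choose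
        ((lift n v).choose_spec.choose_spec.choose_spec.choose a) = v a :=
      (lift n v).choose_spec.choose_spec.choose_spec.choose_spec
    have h1 := indep n' (fun a => v (φ a))
      (lift n' (fun a => v (φ a))).choose_spec.choose
      (lift n v).choose_spec.choose
      (lift n' (fun a => v (φ a))).choose_spec.choose_spec.choose
      (lift n v).choose_spec.choose_spec.choose
      (lift n' (fun a => v (φ a))).choose_spec.choose_spec.choose_spec.choose
      (fun a => (lift n v).choose_spec.choose_spec.choose_spec.choose (φ a))
      (lift n' (fun a => v (φ a))).choose_spec.choose_spec.choose_spec.choose_spec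
      (fun a => hwspec (φ a))
    exact h1.trans
      ((x (lift n v).choose_spec.choose (lift n v).choose_spec.choose_spec.choose).2
        n n' φ (lift n v).choose_spec.choose_spec.choose_spec.choose)
  · -- it is an amalgamation
    intro S f hf
    apply Fam.ext
    intro n v
    exact indep n (fun a => f (v a)) _ f _ hf _ v
      (lift n (fun a => f (v a))).choose_spec.choose_spec.choose_spec.choose_spec
      (fun a => rfl)
  · -- uniqueness
    intro z hz
    apply Fam.ext
    intro n u
    have hwspec : ∀ a, (lift n u).choose_spec.choose
        ((lift n u).choose_spec.choose_spec.choose_spec.choose a) = u a :=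
      (lift n u).choose_spec.choose_spec.choose_spec.choose_spec
    have h2 : z.1 n (fun a => (lift n u).choose_spec.choose
        ((lift n u).choose_spec.choose_spec.choose_spec.choose a))
        = (x (lift n u).choose_spec.choose
            (lift n u).choose_spec.choose_spec.choose).1 n
            (lift n u).choose_spec.choose_spec.choose_spec.choose := by
      have h1 : ((E G).map ((lift n u).choose_spec.choose).op z).1 n
          (lift n u).choose_spec.choose_spec.choose_spec.choose
          = (x (lift n u).choose_spec.choose
              (lift n u).choose_spec.choose_spec.choose).1 n
              (lift n u).choose_spec.choose_spec.choose_spec.choose := by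
        rw [hz (lift n u).choose_spec.choose (lift n u).choose_spec.choose_spec.choose]
      exact h1
    have h3 : (fun a => (lift n u).choose_spec.choose
        ((lift n u).choose_spec.choose_spec.choose_spec.choose a)) = u := funext hwspec
    rw [h3] at h2
    exact h2

/-! ### Fullness and faithfulness ingredients -/

/-- Push a compatible family forward along a natural transformation of restrictions. -/
def pushFam (φ : FintypeCat.incl.op ⋙ F ⟶ FintypeCat.incl.op ⋙ F') {T : Type u}
    (y : Fam (FintypeCat.incl.op ⋙ F) T) : Fam (FintypeCat.incl.op ⋙ F') T :=
  ⟨fun n u => φ.app (op (sk n)) (y.1 n u), by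
    intro n n' ψ v
    show φ.app (op (sk n')) (y.1 n' (fun a => v (ψ a))) = _
    rw [y.2 n n' ψ v]
    exact ConcreteCategory.congr_hom (φ.naturality ψ.op) (y.1 n v)⟩

/-- `theta` as an equivalence, for a sheaf. -/
noncomputable def thetaEquiv (hF : Presieve.IsSheaf (K) F) (T : Type u) :
    F.obj (op T) ≃ Fam (FintypeCat.incl.op ⋙ F) T :=
  Equiv.ofBijective _ (theta_bijective hF T)

/-! ### The restriction functor and its properties -/

noncomputable abbrev L : Sheaf (K.{u}) (Type u) ⥤ (FintypeCat.{u}ᵒᵖ ⥤ Type u) :=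
  sheafToPresheaf (K) (Type u) ⋙
    (Functor.whiskeringLeft FintypeCat.{u}ᵒᵖ (Type u)ᵒᵖ (Type u)).obj FintypeCat.incl.op

lemma sheaf_cond (Fs : Sheaf (K.{u}) (Type u)) : Presieve.IsSheaf (K) Fs.val :=
  (CategoryTheory.isSheaf_iff_isSheaf_of_type (K) Fs.val).mp Fs.cond

instance L_faithful : L.{u}.Faithful where
  map_injective := by
    intro Fs F's η η' h
    apply Sheaf.hom_ext
    apply NatTrans.ext
    funext T
    ext x
    apply (theta_bijective (sheaf_cond F's) (unop T)).1
    apply Fam.ext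
    intro n u
    show F's.val.map (oph u) (η.hom.app T x) = F's.val.map (oph u) (η'.hom.app T x)
    have h1 : F's.val.map (oph u) (η.hom.app T x)
        = η.hom.app (op (FintypeCat.incl.obj (sk n))) (Fs.val.map (oph u) x) :=
      (ConcreteCategory.congr_hom (η.hom.naturality (oph u)) x).symm
    have h2 : η.hom.app (op (FintypeCat.incl.obj (sk n))) (Fs.val.map (oph u) x)
        = η'.hom.app (op (FintypeCat.incl.obj (sk n))) (Fs.val.map (oph u) x) :=
      ConcreteCategory.congr_hom (NatTrans.congr_app h (op (sk n))) (Fs.val.map (oph u) x)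
    have h3 : η'.hom.app (op (FintypeCat.incl.obj (sk n))) (Fs.val.map (oph u) x)
        = F's.val.map (oph u) (η'.hom.app T x) :=
      ConcreteCategory.congr_hom (η'.hom.naturality (oph u)) x
    exact h1.trans (h2.trans h3)

noncomputable instance L_full : L.{u}.Full where
  map_surjective := by
    intro Fs F's φ
    refine ⟨⟨⟨fun T => TypeCat.ofHom fun x =>
        (thetaEquiv (sheaf_cond F's) (unop T)).symm (pushFam φ (theta x)), ?_⟩⟩, ?_⟩
    · intro T T' g
      rw [← Quiver.Hom.op_unop g]
      ext x
      apply (theta_bijective (sheaf_cond F's) (unop T')).1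
      have e1 : theta ((thetaEquiv (sheaf_cond F's) (unop T')).symm
          (pushFam φ (theta (Fs.val.map g.unop.op x))))
          = pushFam φ (theta (Fs.val.map g.unop.op x)) :=
        (thetaEquiv (sheaf_cond F's) (unop T')).apply_symm_apply _
      have e2 : theta ((thetaEquiv (sheaf_cond F's) (unop T)).symm
          (pushFam φ (theta x))) = pushFam φ (theta x) :=
        (thetaEquiv (sheaf_cond F's) (unop T)).apply_symm_apply _
      exact e1.trans ((congrArg (pushFam φ) (theta_natural g.unop x)).trans
        (((congrArg ((E (FintypeCat.incl.op ⋙ F's.val)).map g.unop.op) e2).symm).trans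
          (theta_natural g.unop _).symm))
    · apply NatTrans.ext
      funext X
      ext x
      apply (theta_bijective (sheaf_cond F's) (FintypeCat.incl.obj (unop X))).1
      refine ((thetaEquiv (sheaf_cond F's)
        (FintypeCat.incl.obj (unop X))).apply_symm_apply _).trans ?_
      apply Fam.ext
      intro n u
      show φ.app (op (sk n)) (Fs.val.map (oph u) x) = F's.val.map (oph u) (φ.app X x)
      exact ConcreteCategory.congr_hom (φ.naturality (Quiver.Hom.op (FintypeCat.homMk u : sk n ⟶ unop X))) x

/-! ### Essential surjectivity -/

noncomputable def famEquiv (G : FintypeCat.{u}ᵒᵖ ⥤ Type u) (A : FintypeCat.{u}) :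
    Fam G (FintypeCat.incl.obj A) ≃ G.obj (op A) where
  toFun y := y.app' A (fun a => a)
  invFun g := ⟨fun n u => G.map (Quiver.Hom.op (FintypeCat.homMk u : sk n ⟶ A)) g, by
    intro n n' φ v
    show G.map (Quiver.Hom.op (FintypeCat.homMk (fun a => v (φ a)) : sk n' ⟶ A)) g
        = G.map φ.op (G.map (Quiver.Hom.op (FintypeCat.homMk v : sk n ⟶ A)) g)
    rw [← FunctorToTypes.map_comp_apply]
    rfl⟩
  left_inv := by
    intro y
    apply Fam.ext
    intro n u
    calc G.map (Quiver.Hom.op (FintypeCat.homMk u : sk n ⟶ A)) (y.app' A (fun a => a))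
        = y.app' (sk n) u := (y.compat' (FintypeCat.homMk u : sk n ⟶ A) (fun a => a)).symm
      _ = y.1 n u := Fam.app'_sk y n u
  right_inv := by
    intro g
    show G.map (toSkIso A).inv.op
        (G.map (Quiver.Hom.op (FintypeCat.homMk (fun a => (toSkIso A).hom a) : sk (toSk A) ⟶ A)) g) = g
    have he : (FintypeCat.homMk (fun a => (toSkIso A).hom a) : sk (toSk A) ⟶ A) = (toSkIso A).hom := rfl
    rw [he, ← FunctorToTypes.map_comp_apply, ← op_comp, Iso.inv_hom_id, op_id,
      FunctorToTypes.map_id_apply]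

noncomputable def resEIso (G : FintypeCat.{u}ᵒᵖ ⥤ Type u) :
    FintypeCat.incl.op ⋙ E G ≅ G :=
  NatIso.ofComponents (fun X => Equiv.toIso (famEquiv G (unop X))) (by
    intro X Y ψ
    ext y
    show famEquiv G (unop Y) ((FintypeCat.incl.op ⋙ E G).map ψ y)
        = G.map ψ (famEquiv G (unop X) y)
    calc famEquiv G (unop Y) ((FintypeCat.incl.op ⋙ E G).map ψ y)
        = y.app' (unop Y) (fun a => ψ.unop a) :=
          Fam.app'_map (FintypeCat.incl.map ψ.unop) y (unop Y) (fun a => a)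
      _ = G.map ψ (famEquiv G (unop X) y) := y.compat' ψ.unop (fun a => a))

noncomputable instance L_essSurj : L.{u}.EssSurj where
  mem_essImage G :=
    ⟨⟨E G, (CategoryTheory.isSheaf_iff_isSheaf_of_type (K) (E G)).mpr (E_isSheaf G)⟩,
      ⟨resEIso G⟩⟩

end Stmt14

open Stmt14

/- STATEMENT 14: On the category of types, declare a sieve `R` on `T` to be covering if every
finite subset `Λ` of `T` is contained in the range of some member of `R`.  Then (i) these
covering sieves form a Grothendieck topology, and (ii) restriction along the inclusion
`FintypeCat ⥤ Type` induces an equivalence from the category of sheaves of types for this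
topology to the category of presheaves of types on the category of finite types. -/
theorem stmt14 :
    ∃ K : GrothendieckTopology (Type u),
      -- (i) the covering sieves of `K` are exactly the sieves described above
      (∀ (T : Type u) (R : Sieve T),
        R ∈ K T ↔ ∀ Λ : Finset T, ∃ (S : Type u) (f : S ⟶ T), R f ∧
          ∀ t ∈ Λ, t ∈ Set.range f) ∧
      -- (ii) restriction along `FintypeCat.incl` is an equivalence from sheaves for `K`
      -- to presheaves on the category of finite types
      (sheafToPresheaf K (Type u) ⋙
        (Functor.whiskeringLeft FintypeCat.{u}ᵒᵖ (Type u)ᵒᵖ (Type u)).obj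
          FintypeCat.incl.op).IsEquivalence := by
  refine ⟨Stmt14.K.{u}, fun T R => Iff.rfl, ?_⟩
  exact { faithful := Stmt14.L_faithful.{u}, full := Stmt14.L_full.{u},
          essSurj := Stmt14.L_essSurj.{u} }
end
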